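/- arXiv:2512.00430 — 4 statements merged into one kernel-verified Lean document; each statement's English description precedes it below -/
import Mathlib

section
/- Let Ω = (0,L)×(-H,0) be divided into horizontal layers with piecewise constant permeability K (bounded between k₋ > 0 and k₊) and let u = -K(∇p + ψ e_z) with ∇·u = 0, where p solves the associated Neumann elliptic problem. Then ‖∂_x u‖_{L²(Ω)} ≤ (2 k₊²/k₋) ‖∂_x ψ‖_{L²(Ω)}. -/
open Set MeasureTheory
open scoped ENNReal

/-- Weak solution of the Neumann pressure problem `-∇·(K∇p) = ∇·(K ψ e_z)`
on `Ω = (0,L) × (-H,0)`, tested against `C¹` horizontally periodic functions. -/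
def IsWeakSol (L H : ℝ) (K : ℝ → ℝ) (p ψ : ℝ × ℝ → ℝ) : Prop :=
  ∀ φ : ℝ × ℝ → ℝ, ContDiff ℝ 1 φ → (∀ x : ℝ × ℝ, φ (x.1 + L, x.2) = φ x) →
    (∫ x in Ioo 0 L ×ˢ Ioo (-H) 0,
        K x.2 * (fderiv ℝ p x (1, 0) * fderiv ℝ φ x (1, 0) +
          fderiv ℝ p x (0, 1) * fderiv ℝ φ x (0, 1))) =
      - ∫ x in Ioo 0 L ×ˢ Ioo (-H) 0, K x.2 * ψ x * fderiv ℝ φ x (0, 1)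

open Filter
open scoped Topology

section Aux
variable {L H : ℝ}

lemma meas_dom (L H : ℝ) : MeasurableSet (Ioo (0:ℝ) L ×ˢ Ioo (-H) (0:ℝ)) :=
  measurableSet_Ioo.prod measurableSet_Ioo

lemma vol_dom_lt (L H : ℝ) : volume (Ioo (0:ℝ) L ×ˢ Ioo (-H) (0:ℝ)) < ⊤ := by
  rw [Measure.volume_eq_prod, Measure.prod_prod, Real.volume_Ioo, Real.volume_Ioo]
  exact ENNReal.mul_lt_top ENNReal.ofReal_lt_top ENNReal.ofReal_lt_top

lemma integrableOn_of_bdd {f : ℝ × ℝ → ℝ}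
    (hm : AEStronglyMeasurable f (volume : Measure (ℝ × ℝ)))
    {C : ℝ} (hb : ∀ x ∈ Ioo (0:ℝ) L ×ˢ Ioo (-H) (0:ℝ), |f x| ≤ C) :
    IntegrableOn f (Ioo (0:ℝ) L ×ˢ Ioo (-H) (0:ℝ)) := by
  refine Measure.integrableOn_of_bounded (M := C) (vol_dom_lt L H).ne hm ?_
  rw [ae_restrict_iff' (meas_dom L H)]
  exact .of_forall fun x hx => by simpa [Real.norm_eq_abs] using hb x hx

lemma bddOn_of_continuous {g : ℝ × ℝ → ℝ} (hg : Continuous g) :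
    ∃ C : ℝ, 0 ≤ C ∧ ∀ x ∈ Ioo (0:ℝ) L ×ˢ Ioo (-H) (0:ℝ), |g x| ≤ C := by
  obtain ⟨C, hC⟩ := (isCompact_Icc.prod isCompact_Icc : IsCompact
      (Icc (0:ℝ) L ×ˢ Icc (-H) (0:ℝ))).exists_bound_of_continuousOn hg.continuousOn
  refine ⟨max C 0, le_max_right _ _, fun x hx => le_trans ?_ (le_max_left _ _)⟩
  simpa [Real.norm_eq_abs] using hC x ⟨Ioo_subset_Icc_self hx.1, Ioo_subset_Icc_self hx.2⟩

lemma intK {M : ℝ} {K : ℝ → ℝ} (hKmeas : Measurable K) (hKbd : ∀ z, |K z| ≤ M)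
    {g : ℝ × ℝ → ℝ} (hg : Continuous g) :
    IntegrableOn (fun x => K x.2 * g x) (Ioo (0:ℝ) L ×ˢ Ioo (-H) (0:ℝ)) := by
  obtain ⟨C, -, hC⟩ := bddOn_of_continuous (L := L) (H := H) hg
  refine integrableOn_of_bdd
    ((hKmeas.comp measurable_snd).mul hg.measurable).aestronglyMeasurable (C := M * C) ?_
  intro x hx
  rw [abs_mul]
  exact mul_le_mul (hKbd _) (hC x hx) (abs_nonneg _) ((abs_nonneg _).trans (hKbd x.2))

lemma shift_integral (hL : 0 < L) {M : ℝ} {K : ℝ → ℝ} (hKmeas : Measurable K)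
    (hKbd : ∀ z, |K z| ≤ M) {g : ℝ × ℝ → ℝ} (hg : Continuous g)
    (hper : ∀ x : ℝ × ℝ, g (x.1 + L, x.2) = g x) (t : ℝ) :
    ∫ x in Ioo (0:ℝ) L ×ˢ Ioo (-H) (0:ℝ), K x.2 * g (x.1 + t, x.2)
      = ∫ x in Ioo (0:ℝ) L ×ˢ Ioo (-H) (0:ℝ), K x.2 * g x := by
  have hgt : Continuous (fun x : ℝ × ℝ => g (x.1 + t, x.2)) :=
    hg.comp ((continuous_fst.add continuous_const).prodMk continuous_snd)
  set G : ℝ → ℝ := fun s => ∫ y in Ioo (-H) (0:ℝ), K y * g (s, y) with hG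
  have hGper : Function.Periodic G L := by
    intro s
    exact integral_congr_ae (.of_forall fun y => by simp only []; rw [show g (s + L, y) = g (s, y) from hper (s, y)])
  have h1 : ∫ x in Ioo (0:ℝ) L ×ˢ Ioo (-H) (0:ℝ), K x.2 * g (x.1 + t, x.2)
      = ∫ s in Ioo (0:ℝ) L, G (s + t) := by
    rw [Measure.volume_eq_prod ℝ ℝ]
    exact setIntegral_prod _ (by
      rw [← Measure.volume_eq_prod ℝ ℝ]
      exact intK hKmeas hKbd hgt)
  have h2 : ∫ x in Ioo (0:ℝ) L ×ˢ Ioo (-H) (0:ℝ), K x.2 * g x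
      = ∫ s in Ioo (0:ℝ) L, G s := by
    rw [Measure.volume_eq_prod ℝ ℝ]
    exact setIntegral_prod _ (by
      rw [← Measure.volume_eq_prod ℝ ℝ]
      exact intK hKmeas hKbd hg)
  rw [h1, h2]
  have e1 : ∫ s in Ioo (0:ℝ) L, G (s + t) = ∫ s in (0:ℝ)..L, G (s + t) := by
    rw [intervalIntegral.integral_of_le hL.le, integral_Ioc_eq_integral_Ioo]
  have e2 : ∫ s in Ioo (0:ℝ) L, G s = ∫ s in (0:ℝ)..L, G s := by
    rw [intervalIntegral.integral_of_le hL.le, integral_Ioc_eq_integral_Ioo]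
  rw [e1, e2, intervalIntegral.integral_comp_add_right, zero_add,
    show L + t = t + L from add_comm _ _, hGper.intervalIntegral_add_eq t 0, zero_add]
end Aux

section Deriv

lemma hasFDerivAt_shift {f : ℝ × ℝ → ℝ} (hf : Differentiable ℝ f) (c x : ℝ × ℝ) :
    HasFDerivAt (fun y => f (y + c)) (fderiv ℝ f (x + c)) x := by
  simpa [Function.comp_def] using (hf (x + c)).hasFDerivAt.comp x ((hasFDerivAt_id x).add_const c)

lemma fderiv_periodic {f : ℝ × ℝ → ℝ} {c : ℝ × ℝ} (hf : Differentiable ℝ f)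
    (hper : ∀ x : ℝ × ℝ, f (x + c) = f x) (x : ℝ × ℝ) :
    fderiv ℝ f (x + c) = fderiv ℝ f x := by
  have h1 := hasFDerivAt_shift hf c x
  rw [funext hper] at h1
  exact h1.fderiv.symm

lemma contDiff_fderiv_apply {f : ℝ × ℝ → ℝ} {n m : WithTop ℕ∞} (hf : ContDiff ℝ n f)
    (h : m + 1 ≤ n) (v : ℝ × ℝ) : ContDiff ℝ m (fun y => fderiv ℝ f y v) :=
  (hf.fderiv_right h).clm_apply contDiff_const

lemma hasFDerivAt_fderiv_apply {f : ℝ × ℝ → ℝ} (hf : ContDiff ℝ 2 f) (x v : ℝ × ℝ) :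
    HasFDerivAt (fun y => fderiv ℝ f y v)
      ((ContinuousLinearMap.apply ℝ ℝ v).comp (fderiv ℝ (fderiv ℝ f) x)) x := by
  have h2 : DifferentiableAt ℝ (fderiv ℝ f) x :=
    ((hf.fderiv_right (m := 1) (by norm_num)).differentiable one_ne_zero) x
  exact (ContinuousLinearMap.apply ℝ ℝ v).hasFDerivAt.comp x h2.hasFDerivAt

lemma fderiv_fderiv_apply {f : ℝ × ℝ → ℝ} (hf : ContDiff ℝ 2 f) (x v w : ℝ × ℝ) :
    fderiv ℝ (fun y => fderiv ℝ f y v) x w = fderiv ℝ (fderiv ℝ f) x w v := by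
  rw [(hasFDerivAt_fderiv_apply hf x v).fderiv]; rfl

lemma mixed_symm {f : ℝ × ℝ → ℝ} (hf : ContDiff ℝ 2 f) (x v w : ℝ × ℝ) :
    fderiv ℝ (fun y => fderiv ℝ f y v) x w = fderiv ℝ (fun y => fderiv ℝ f y w) x v := by
  rw [fderiv_fderiv_apply hf, fderiv_fderiv_apply hf]
  have hd : ∀ y, HasFDerivAt f (fderiv ℝ f y) y := fun y =>
    ((hf.differentiable (by norm_num)) y).hasFDerivAt
  have h2 : HasFDerivAt (fderiv ℝ f) (fderiv ℝ (fderiv ℝ f) x) x :=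
    (((hf.fderiv_right (m := 1) (by norm_num)).differentiable one_ne_zero) x).hasFDerivAt
  exact second_derivative_symmetric hd h2 w v

end Deriv

section Quot

lemma quot_bound {f : ℝ × ℝ → ℝ} (hf : ContDiff ℝ 1 f) (L H : ℝ) :
    ∃ C : ℝ, 0 ≤ C ∧ ∀ x ∈ Ioo (0:ℝ) L ×ˢ Ioo (-H) (0:ℝ), ∀ t : ℝ, |t| ≤ 1 →
      |f (x.1 + t, x.2) - f x| ≤ C * |t| := by
  set s : Set (ℝ × ℝ) := Icc (-1 : ℝ) (L+1) ×ˢ Icc (-H) (0:ℝ) with hs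
  have hconv : Convex ℝ s := (convex_Icc _ _).prod (convex_Icc _ _)
  have hcomp : IsCompact s := isCompact_Icc.prod isCompact_Icc
  have hcont : Continuous (fderiv ℝ f) := (hf.fderiv_right (m := 0) (by norm_num)).continuous
  obtain ⟨C, hC⟩ := hcomp.exists_bound_of_continuousOn hcont.continuousOn
  refine ⟨max C 0, le_max_right _ _, fun x hx t ht => ?_⟩
  have h1 := abs_le.1 ht
  have hxs : x ∈ s := ⟨⟨show (-1:ℝ) ≤ x.1 by linarith [hx.1.1],
    show x.1 ≤ L + 1 by linarith [hx.1.2]⟩, Ioo_subset_Icc_self hx.2⟩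
  have hys : ((x.1 + t, x.2) : ℝ × ℝ) ∈ s :=
    ⟨⟨show (-1:ℝ) ≤ x.1 + t by linarith [hx.1.1],
      show x.1 + t ≤ L + 1 by linarith [hx.1.2]⟩, Ioo_subset_Icc_self hx.2⟩
  have hmvt := hconv.norm_image_sub_le_of_norm_fderiv_le
    (fun y _ => (hf.differentiable one_ne_zero) y) (fun y hy => hC y hy) hxs hys
  have hnorm : ‖((x.1 + t, x.2) : ℝ × ℝ) - x‖ = |t| := by
    have h2 : ((x.1 + t, x.2) : ℝ × ℝ) - x = (t, 0) := by ext <;> simp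
    rw [h2, Prod.norm_def]
    simp [Real.norm_eq_abs, abs_nonneg]
  calc |f (x.1 + t, x.2) - f x| = ‖f (x.1 + t, x.2) - f x‖ := rfl
    _ ≤ C * ‖((x.1 + t, x.2) : ℝ × ℝ) - x‖ := hmvt
    _ ≤ max C 0 * ‖((x.1 + t, x.2) : ℝ × ℝ) - x‖ :=
        mul_le_mul_of_nonneg_right (le_max_left _ _) (norm_nonneg _)
    _ = max C 0 * |t| := by rw [hnorm]

lemma quot_tendsto {f : ℝ × ℝ → ℝ} (hf : Differentiable ℝ f) (x : ℝ × ℝ)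
    {u : ℕ → ℝ} (hu : Tendsto u atTop (𝓝 0)) (hu' : ∀ n, u n ≠ 0) :
    Tendsto (fun n => (f (x.1 + u n, x.2) - f x) * (u n)⁻¹) atTop
      (𝓝 (fderiv ℝ f x (1, 0))) := by
  have hcurve : HasDerivAt (fun t : ℝ => x + t • ((1:ℝ), (0:ℝ))) ((1:ℝ), (0:ℝ)) 0 := by
    simpa using ((hasDerivAt_id (0:ℝ)).smul_const ((1:ℝ), (0:ℝ))).const_add x
  have hγ : HasDerivAt (fun t : ℝ => f (x + t • ((1:ℝ), (0:ℝ)))) (fderiv ℝ f x (1, 0)) 0 := by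
    have := (hf (x + (0:ℝ) • ((1:ℝ),(0:ℝ)))).hasFDerivAt.comp_hasDerivAt 0 hcurve
    simpa [Function.comp_def] using this
  have huw : Tendsto u atTop (𝓝[≠] (0:ℝ)) :=
    tendsto_nhdsWithin_of_tendsto_nhds_of_eventually_within u hu
      (.of_forall fun n => hu' n)
  have hcomp := hγ.tendsto_slope_zero.comp huw
  refine hcomp.congr fun n => ?_
  have hx2 : x + (u n) • ((1:ℝ),(0:ℝ)) = ((x.1 + u n, x.2) : ℝ × ℝ) := by
    ext <;> simp
  simp only [Function.comp_apply, zero_add, zero_smul, add_zero, hx2, smul_eq_mul]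
  ring
end Quot

lemma absT {Δ s B C D : ℝ} (h1 : |Δ| ≤ C * |s|) (hs : s ≠ 0) (h2 : |B| ≤ D) (hC : 0 ≤ C) :
    |Δ * s⁻¹ * B| ≤ C * D := by
  have hs' : 0 < |s| := abs_pos.2 hs
  have e : |Δ * s⁻¹ * B| = |Δ| * |s|⁻¹ * |B| := by rw [abs_mul, abs_mul, abs_inv]
  rw [e]
  have h3 : |Δ| * |s|⁻¹ ≤ C := by
    calc |Δ| * |s|⁻¹ ≤ (C * |s|) * |s|⁻¹ :=
          mul_le_mul_of_nonneg_right h1 (inv_nonneg.2 hs'.le)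
      _ = C := by field_simp
  exact mul_le_mul h3 h2 (abs_nonneg _) hC

lemma star_eq {L H kmin kmax : ℝ} (hL : 0 < L)
    {K : ℝ → ℝ} (hKmeas : Measurable K) (hKbd : ∀ z, |K z| ≤ kmax)
    {p ψ : ℝ × ℝ → ℝ} (hp : ContDiff ℝ 2 p) (hψ : ContDiff ℝ 1 ψ)
    (hpper : ∀ x : ℝ × ℝ, p (x.1 + L, x.2) = p x)
    (hψper : ∀ x : ℝ × ℝ, ψ (x.1 + L, x.2) = ψ x)
    (hsol : IsWeakSol L H K p ψ) (t : ℝ) :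
    ∫ x in Ioo (0:ℝ) L ×ˢ Ioo (-H) (0:ℝ), K x.2 *
        ((fderiv ℝ p (x.1+t, x.2) (1,0) - fderiv ℝ p x (1,0)) * t⁻¹
            * fderiv ℝ (fun z => fderiv ℝ p z (1,0)) x (1,0)
          + (fderiv ℝ p (x.1+t, x.2) (0,1) - fderiv ℝ p x (0,1)) * t⁻¹
            * fderiv ℝ (fun z => fderiv ℝ p z (1,0)) x (0,1))
      = - ∫ x in Ioo (0:ℝ) L ×ˢ Ioo (-H) (0:ℝ), K x.2 *
          ((ψ (x.1+t, x.2) - ψ x) * t⁻¹) * fderiv ℝ (fun z => fderiv ℝ p z (1,0)) x (0,1) := by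
  have hadd : ∀ (x : ℝ × ℝ) (s : ℝ), x + ((s,0) : ℝ×ℝ) = (x.1 + s, x.2) := fun x s => by
    ext <;> simp
  set Q : ℝ × ℝ → ℝ := fun z => fderiv ℝ p z (1,0) with hQdef
  have hpd : Differentiable ℝ p := hp.differentiable (by norm_num)
  have hQ1 : ContDiff ℝ 1 Q := contDiff_fderiv_apply hp (by norm_num) (1,0)
  have hQd : Differentiable ℝ Q := hQ1.differentiable one_ne_zero
  have hpperc : ∀ x : ℝ×ℝ, p (x + ((L,0) : ℝ×ℝ)) = p x := fun x => by rw [hadd]; exact hpper x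
  have hQperc : ∀ x : ℝ×ℝ, Q (x + ((L,0) : ℝ×ℝ)) = Q x := fun x => by
    show fderiv ℝ p (x + ((L,0):ℝ×ℝ)) (1,0) = fderiv ℝ p x (1,0)
    rw [fderiv_periodic hpd hpperc x]
  have hψperc : ∀ x : ℝ×ℝ, ψ (x + ((L,0) : ℝ×ℝ)) = ψ x := fun x => by rw [hadd]; exact hψper x
  have hfQper : ∀ x : ℝ×ℝ, fderiv ℝ Q (x + ((L,0) : ℝ×ℝ)) = fderiv ℝ Q x :=
    fderiv_periodic hQd hQperc
  -- continuity facts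
  have hP1c : Continuous (fun x : ℝ×ℝ => fderiv ℝ p x (1,0)) := hQ1.continuous
  have hP2c : Continuous (fun x : ℝ×ℝ => fderiv ℝ p x (0,1)) :=
    (contDiff_fderiv_apply hp (by norm_num) ((0:ℝ),(1:ℝ)) : ContDiff ℝ 1 _).continuous
  have hfQ1c : Continuous (fun x : ℝ×ℝ => fderiv ℝ Q x (1,0)) :=
    (contDiff_fderiv_apply hQ1 (by norm_num) ((1:ℝ),(0:ℝ)) : ContDiff ℝ 0 _).continuous
  have hfQ2c : Continuous (fun x : ℝ×ℝ => fderiv ℝ Q x (0,1)) :=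
    (contDiff_fderiv_apply hQ1 (by norm_num) ((0:ℝ),(1:ℝ)) : ContDiff ℝ 0 _).continuous
  have hshiftc : Continuous (fun x : ℝ×ℝ => ((x.1 + t, x.2) : ℝ×ℝ)) :=
    (continuous_fst.add continuous_const).prodMk continuous_snd
  -- the test function
  set ct : ℝ × ℝ := (-t, 0) with hct
  set φ : ℝ × ℝ → ℝ := fun x => t⁻¹ • (Q (x + ct) - Q x) with hφdef
  have hφ1 : ContDiff ℝ 1 φ :=
    ((hQ1.comp (contDiff_id.add contDiff_const)).sub hQ1).const_smul t⁻¹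
  have hφper : ∀ x : ℝ×ℝ, φ (x.1 + L, x.2) = φ x := by
    intro x
    rw [← hadd x L]
    show t⁻¹ • (Q (x + (L,0) + ct) - Q (x + (L,0))) = t⁻¹ • (Q (x + ct) - Q x)
    rw [add_right_comm, hQperc (x + ct), hQperc x]
  have hdφ : ∀ x : ℝ×ℝ, fderiv ℝ φ x = t⁻¹ • (fderiv ℝ Q (x + ct) - fderiv ℝ Q x) := by
    intro x
    exact (((hasFDerivAt_shift hQd ct x).sub (hQd x).hasFDerivAt).const_smul t⁻¹).fderiv
  have hdφv : ∀ (x : ℝ×ℝ) (v : ℝ×ℝ),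
      fderiv ℝ φ x v = t⁻¹ * (fderiv ℝ Q (x + ct) v - fderiv ℝ Q x v) := by
    intro x v; rw [hdφ]; simp
  have h0 := hsol φ hφ1 hφper
  -- component-wise facts
  have hadd' : ∀ u v s : ℝ, ((u,v) : ℝ×ℝ) + ((s,0) : ℝ×ℝ) = ((u + s, v) : ℝ×ℝ) := by
    intros; ext <;> simp
  have hP1per2 : ∀ u v : ℝ, fderiv ℝ p (u + L, v) = fderiv ℝ p (u, v) := fun u v => by
    have h := fderiv_periodic hpd hpperc (u, v); rwa [hadd'] at h
  have hfQper2 : ∀ u v : ℝ, fderiv ℝ Q (u + L, v) = fderiv ℝ Q (u, v) := fun u v => by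
    have h := hfQper (u, v); rwa [hadd'] at h
  have hψc : Continuous ψ := hψ.continuous
  have hsh : Continuous (fun x : ℝ×ℝ => x + ct) := continuous_id.add continuous_const
  have ig1 : IntegrableOn (fun x : ℝ×ℝ => K x.2 * (fderiv ℝ p x (1,0) * fderiv ℝ Q (x + ct) (1,0) + fderiv ℝ p x (0,1) * fderiv ℝ Q (x + ct) (0,1))) (Ioo (0:ℝ) L ×ˢ Ioo (-H) (0:ℝ)) :=
    intK hKmeas hKbd ((hP1c.mul (hfQ1c.comp hsh)).add (hP2c.mul (hfQ2c.comp hsh)))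
  have ig1' : IntegrableOn (fun x : ℝ×ℝ => K x.2 * (fderiv ℝ p (x.1 + t, x.2) (1,0) * fderiv ℝ Q x (1,0) + fderiv ℝ p (x.1 + t, x.2) (0,1) * fderiv ℝ Q x (0,1))) (Ioo (0:ℝ) L ×ˢ Ioo (-H) (0:ℝ)) :=
    intK hKmeas hKbd (((hP1c.comp hshiftc).mul hfQ1c).add ((hP2c.comp hshiftc).mul hfQ2c))
  have ig2 : IntegrableOn (fun x : ℝ×ℝ => K x.2 * (fderiv ℝ p x (1,0) * fderiv ℝ Q x (1,0) + fderiv ℝ p x (0,1) * fderiv ℝ Q x (0,1))) (Ioo (0:ℝ) L ×ˢ Ioo (-H) (0:ℝ)) :=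
    intK hKmeas hKbd ((hP1c.mul hfQ1c).add (hP2c.mul hfQ2c))
  have igψ1 : IntegrableOn (fun x : ℝ×ℝ => K x.2 * (ψ x * fderiv ℝ Q (x + ct) (0,1))) (Ioo (0:ℝ) L ×ˢ Ioo (-H) (0:ℝ)) :=
    intK hKmeas hKbd (hψc.mul (hfQ2c.comp hsh))
  have igψ1' : IntegrableOn (fun x : ℝ×ℝ => K x.2 * (ψ (x.1 + t, x.2) * fderiv ℝ Q x (0,1))) (Ioo (0:ℝ) L ×ˢ Ioo (-H) (0:ℝ)) :=
    intK hKmeas hKbd ((hψc.comp hshiftc).mul hfQ2c)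
  have igψ2 : IntegrableOn (fun x : ℝ×ℝ => K x.2 * (ψ x * fderiv ℝ Q x (0,1))) (Ioo (0:ℝ) L ×ˢ Ioo (-H) (0:ℝ)) :=
    intK hKmeas hKbd (hψc.mul hfQ2c)
  -- shift for the p-part
  have hshift1 : (∫ x in Ioo (0:ℝ) L ×ˢ Ioo (-H) (0:ℝ), K x.2 * (fderiv ℝ p x (1,0) * fderiv ℝ Q (x + ct) (1,0) + fderiv ℝ p x (0,1) * fderiv ℝ Q (x + ct) (0,1)))
      = ∫ x in Ioo (0:ℝ) L ×ˢ Ioo (-H) (0:ℝ), K x.2 * (fderiv ℝ p (x.1 + t, x.2) (1,0) * fderiv ℝ Q x (1,0) + fderiv ℝ p (x.1 + t, x.2) (0,1) * fderiv ℝ Q x (0,1)) := by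
    have hper : ∀ x : ℝ×ℝ, (fun x : ℝ×ℝ => fderiv ℝ p (x.1 + t, x.2) (1,0) * fderiv ℝ Q x (1,0) + fderiv ℝ p (x.1 + t, x.2) (0,1) * fderiv ℝ Q x (0,1)) (x.1 + L, x.2) = (fun x : ℝ×ℝ => fderiv ℝ p (x.1 + t, x.2) (1,0) * fderiv ℝ Q x (1,0) + fderiv ℝ p (x.1 + t, x.2) (0,1) * fderiv ℝ Q x (0,1)) x := by
      intro x
      show fderiv ℝ p (x.1 + L + t, x.2) (1,0) * fderiv ℝ Q (x.1 + L, x.2) (1,0) + fderiv ℝ p (x.1 + L + t, x.2) (0,1) * fderiv ℝ Q (x.1 + L, x.2) (0,1) = _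
      rw [show x.1 + L + t = x.1 + t + L from by ring, hP1per2 (x.1 + t) x.2, hfQper2 x.1 x.2]
    have hs := shift_integral (H := H) hL hKmeas hKbd (((hP1c.comp hshiftc).mul hfQ1c).add ((hP2c.comp hshiftc).mul hfQ2c)) hper (-t)
    refine Eq.trans ?_ hs
    refine integral_congr_ae (.of_forall fun x => ?_)
    show K x.2 * (fderiv ℝ p x (1,0) * fderiv ℝ Q (x + ct) (1,0) + fderiv ℝ p x (0,1) * fderiv ℝ Q (x + ct) (0,1))
        = K x.2 * (fderiv ℝ p (x.1 + -t + t, x.2) (1,0) * fderiv ℝ Q (x.1 + -t, x.2) (1,0) + fderiv ℝ p (x.1 + -t + t, x.2) (0,1) * fderiv ℝ Q (x.1 + -t, x.2) (0,1))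
    rw [hct, ← hadd x (-t), show x.1 + -t + t = x.1 from by ring, Prod.mk.eta]
  -- shift for the ψ-part
  have hshiftψ : (∫ x in Ioo (0:ℝ) L ×ˢ Ioo (-H) (0:ℝ), K x.2 * (ψ x * fderiv ℝ Q (x + ct) (0,1)))
      = ∫ x in Ioo (0:ℝ) L ×ˢ Ioo (-H) (0:ℝ), K x.2 * (ψ (x.1 + t, x.2) * fderiv ℝ Q x (0,1)) := by
    have hper : ∀ x : ℝ×ℝ, (fun x : ℝ×ℝ => ψ (x.1 + t, x.2) * fderiv ℝ Q x (0,1)) (x.1 + L, x.2) = (fun x : ℝ×ℝ => ψ (x.1 + t, x.2) * fderiv ℝ Q x (0,1)) x := by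
      intro x
      show ψ (x.1 + L + t, x.2) * fderiv ℝ Q (x.1 + L, x.2) (0,1) = _
      rw [show x.1 + L + t = x.1 + t + L from by ring, hfQper2 x.1 x.2]
      have hψ2 : ψ (x.1 + t + L, x.2) = ψ (x.1 + t, x.2) := hψper (x.1 + t, x.2)
      rw [hψ2]
    have hs := shift_integral (H := H) hL hKmeas hKbd ((hψc.comp hshiftc).mul hfQ2c) hper (-t)
    refine Eq.trans ?_ hs
    refine integral_congr_ae (.of_forall fun x => ?_)
    show K x.2 * (ψ x * fderiv ℝ Q (x + ct) (0,1))
        = K x.2 * (ψ (x.1 + -t + t, x.2) * fderiv ℝ Q (x.1 + -t, x.2) (0,1))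
    rw [hct, ← hadd x (-t), show x.1 + -t + t = x.1 from by ring, Prod.mk.eta]
  -- LHS chain
  have hL2 : (∫ x in Ioo (0:ℝ) L ×ˢ Ioo (-H) (0:ℝ), K x.2 * (fderiv ℝ p x (1,0) * fderiv ℝ φ x (1,0) + fderiv ℝ p x (0,1) * fderiv ℝ φ x (0,1)))
      = ∫ x in Ioo (0:ℝ) L ×ˢ Ioo (-H) (0:ℝ), K x.2 * ((fderiv ℝ p (x.1+t, x.2) (1,0) - fderiv ℝ p x (1,0)) * t⁻¹ * fderiv ℝ Q x (1,0) + (fderiv ℝ p (x.1+t, x.2) (0,1) - fderiv ℝ p x (0,1)) * t⁻¹ * fderiv ℝ Q x (0,1)) := by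
    have e1 : (∫ x in Ioo (0:ℝ) L ×ˢ Ioo (-H) (0:ℝ), K x.2 * (fderiv ℝ p x (1,0) * fderiv ℝ φ x (1,0) + fderiv ℝ p x (0,1) * fderiv ℝ φ x (0,1)))
        = t⁻¹ • ((∫ x in Ioo (0:ℝ) L ×ˢ Ioo (-H) (0:ℝ), K x.2 * (fderiv ℝ p x (1,0) * fderiv ℝ Q (x + ct) (1,0) + fderiv ℝ p x (0,1) * fderiv ℝ Q (x + ct) (0,1)))
          - ∫ x in Ioo (0:ℝ) L ×ˢ Ioo (-H) (0:ℝ), K x.2 * (fderiv ℝ p x (1,0) * fderiv ℝ Q x (1,0) + fderiv ℝ p x (0,1) * fderiv ℝ Q x (0,1))) := by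
      rw [← integral_sub ig1 ig2, ← integral_smul]
      refine integral_congr_ae (.of_forall fun x => ?_)
      simp only [hdφv, smul_eq_mul]
      ring
    rw [e1, hshift1, ← integral_sub ig1' ig2, ← integral_smul]
    refine integral_congr_ae (.of_forall fun x => ?_)
    simp only [smul_eq_mul]
    ring
  -- RHS chain
  have hR2 : (∫ x in Ioo (0:ℝ) L ×ˢ Ioo (-H) (0:ℝ), K x.2 * ψ x * fderiv ℝ φ x (0,1))
      = ∫ x in Ioo (0:ℝ) L ×ˢ Ioo (-H) (0:ℝ), K x.2 * ((ψ (x.1+t, x.2) - ψ x) * t⁻¹) * fderiv ℝ Q x (0,1) := by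
    have e1 : (∫ x in Ioo (0:ℝ) L ×ˢ Ioo (-H) (0:ℝ), K x.2 * ψ x * fderiv ℝ φ x (0,1))
        = t⁻¹ • ((∫ x in Ioo (0:ℝ) L ×ˢ Ioo (-H) (0:ℝ), K x.2 * (ψ x * fderiv ℝ Q (x + ct) (0,1)))
          - ∫ x in Ioo (0:ℝ) L ×ˢ Ioo (-H) (0:ℝ), K x.2 * (ψ x * fderiv ℝ Q x (0,1))) := by
      rw [← integral_sub igψ1 igψ2, ← integral_smul]
      refine integral_congr_ae (.of_forall fun x => ?_)
      simp only [hdφv, smul_eq_mul]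
      ring
    rw [e1, hshiftψ, ← integral_sub igψ1' igψ2, ← integral_smul]
    refine integral_congr_ae (.of_forall fun x => ?_)
    simp only [smul_eq_mul]
    ring
  rw [← hL2, h0, hR2]

lemma core {L H kmin kmax : ℝ} (hL : 0 < L) (hH : 0 < H) (hk : 0 < kmin)
    {K : ℝ → ℝ} (hKmeas : Measurable K) (hKbd : ∀ z, kmin ≤ K z ∧ K z ≤ kmax)
    {p ψ : ℝ × ℝ → ℝ} (hp : ContDiff ℝ 2 p) (hψ : ContDiff ℝ 1 ψ)
    (hpper : ∀ x : ℝ × ℝ, p (x.1 + L, x.2) = p x)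
    (hψper : ∀ x : ℝ × ℝ, ψ (x.1 + L, x.2) = ψ x)
    (hsol : IsWeakSol L H K p ψ) :
    ∫ x in Ioo (0:ℝ) L ×ˢ Ioo (-H) (0:ℝ), K x.2 *
        (fderiv ℝ (fun z => fderiv ℝ p z (1,0)) x (1,0) * fderiv ℝ (fun z => fderiv ℝ p z (1,0)) x (1,0)
          + fderiv ℝ (fun z => fderiv ℝ p z (1,0)) x (0,1) * fderiv ℝ (fun z => fderiv ℝ p z (1,0)) x (0,1))
      = - ∫ x in Ioo (0:ℝ) L ×ˢ Ioo (-H) (0:ℝ),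
          K x.2 * fderiv ℝ ψ x (1,0) * fderiv ℝ (fun z => fderiv ℝ p z (1,0)) x (0,1) := by
  have hkmax : 0 < kmax := lt_of_lt_of_le hk ((hKbd 0).1.trans (hKbd 0).2)
  have hKabs : ∀ z, |K z| ≤ kmax := fun z => abs_le.2 ⟨by linarith [(hKbd z).1], (hKbd z).2⟩
  -- the sequence of increments
  set u : ℕ → ℝ := fun n => 1 / ((n : ℝ) + 1) with hu
  have hupos : ∀ n, 0 < u n := fun n => by positivity
  have hune : ∀ n, u n ≠ 0 := fun n => (hupos n).ne'
  have hule : ∀ n, |u n| ≤ 1 := fun n => by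
    rw [abs_of_pos (hupos n)]
    rw [div_le_one (by positivity)]
    simp
  have hu0 : Tendsto u atTop (𝓝 0) := tendsto_one_div_add_atTop_nhds_zero_nat
  -- smoothness
  have hpd : Differentiable ℝ p := hp.differentiable (by norm_num)
  have hP1 : ContDiff ℝ 1 (fun z : ℝ×ℝ => fderiv ℝ p z (1,0)) :=
    contDiff_fderiv_apply hp (by norm_num) (1,0)
  have hP2 : ContDiff ℝ 1 (fun z : ℝ×ℝ => fderiv ℝ p z (0,1)) :=
    contDiff_fderiv_apply hp (by norm_num) (0,1)
  have hP1c : Continuous (fun z : ℝ×ℝ => fderiv ℝ p z (1,0)) := hP1.continuous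
  have hP2c : Continuous (fun z : ℝ×ℝ => fderiv ℝ p z (0,1)) := hP2.continuous
  have hψc : Continuous ψ := hψ.continuous
  have hac : Continuous (fun x : ℝ×ℝ => fderiv ℝ (fun z : ℝ×ℝ => fderiv ℝ p z (1,0)) x (1,0)) :=
    (contDiff_fderiv_apply hP1 (by norm_num) ((1:ℝ),(0:ℝ)) : ContDiff ℝ 0 _).continuous
  have hbc : Continuous (fun x : ℝ×ℝ => fderiv ℝ (fun z : ℝ×ℝ => fderiv ℝ p z (1,0)) x (0,1)) :=
    (contDiff_fderiv_apply hP1 (by norm_num) ((0:ℝ),(1:ℝ)) : ContDiff ℝ 0 _).continuous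
  -- bounds
  obtain ⟨C1, hC1nn, hC1⟩ := quot_bound hP1 L H
  obtain ⟨C2, hC2nn, hC2⟩ := quot_bound hP2 L H
  obtain ⟨C3, hC3nn, hC3⟩ := quot_bound hψ L H
  obtain ⟨Ca, hCann, hCa⟩ := bddOn_of_continuous (L := L) (H := H) hac
  obtain ⟨Cb, hCbnn, hCb⟩ := bddOn_of_continuous (L := L) (H := H) hbc
  haveI : IsFiniteMeasure (volume.restrict (Ioo (0:ℝ) L ×ˢ Ioo (-H) (0:ℝ))) :=
    ⟨by rw [Measure.restrict_apply_univ]; exact vol_dom_lt L H⟩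
  -- limit of the left-hand sides
  have hFlim : Tendsto (fun n => ∫ x in Ioo (0:ℝ) L ×ˢ Ioo (-H) (0:ℝ), K x.2 *
        ((fderiv ℝ p (x.1 + u n, x.2) (1,0) - fderiv ℝ p x (1,0)) * (u n)⁻¹
            * fderiv ℝ (fun z => fderiv ℝ p z (1,0)) x (1,0)
          + (fderiv ℝ p (x.1 + u n, x.2) (0,1) - fderiv ℝ p x (0,1)) * (u n)⁻¹
            * fderiv ℝ (fun z => fderiv ℝ p z (1,0)) x (0,1))) atTop
      (𝓝 (∫ x in Ioo (0:ℝ) L ×ˢ Ioo (-H) (0:ℝ), K x.2 *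
        (fderiv ℝ (fun z => fderiv ℝ p z (1,0)) x (1,0) * fderiv ℝ (fun z => fderiv ℝ p z (1,0)) x (1,0)
          + fderiv ℝ (fun z => fderiv ℝ p z (0,1)) x (1,0) * fderiv ℝ (fun z => fderiv ℝ p z (1,0)) x (0,1)))) := by
    refine tendsto_integral_of_dominated_convergence
      (fun _ => kmax * (C1 * Ca + C2 * Cb)) (fun n => ?_) (integrable_const _) (fun n => ?_) ?_
    · have hshn : Continuous (fun x : ℝ×ℝ => ((x.1 + u n, x.2) : ℝ×ℝ)) :=
        (continuous_fst.add continuous_const).prodMk continuous_snd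
      exact (((hKmeas.comp measurable_snd).mul
        (((((hP1c.comp hshn).sub hP1c).mul continuous_const).mul hac).add
          ((((hP2c.comp hshn).sub hP2c).mul continuous_const).mul hbc)).measurable).aestronglyMeasurable).restrict
    · rw [ae_restrict_iff' (meas_dom L H)]
      refine .of_forall fun x hx => ?_
      have h1 : |(fderiv ℝ p (x.1 + u n, x.2) (1,0) - fderiv ℝ p x (1,0)) * (u n)⁻¹
          * fderiv ℝ (fun z => fderiv ℝ p z (1,0)) x (1,0)| ≤ C1 * Ca :=
        absT (hC1 x hx (u n) (hule n)) (hune n) (hCa x hx) hC1nn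
      have h2 : |(fderiv ℝ p (x.1 + u n, x.2) (0,1) - fderiv ℝ p x (0,1)) * (u n)⁻¹
          * fderiv ℝ (fun z => fderiv ℝ p z (1,0)) x (0,1)| ≤ C2 * Cb :=
        absT (hC2 x hx (u n) (hule n)) (hune n) (hCb x hx) hC2nn
      have h3 := (abs_add_le _ _).trans (add_le_add h1 h2)
      calc ‖K x.2 * (_ + _)‖ = |K x.2| * |_ + _| := abs_mul _ _
        _ ≤ kmax * (C1 * Ca + C2 * Cb) :=
          mul_le_mul (hKabs x.2) h3 (abs_nonneg _) hkmax.le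
    · refine .of_forall fun x => ?_
      have hT1 := quot_tendsto (hP1.differentiable one_ne_zero) x hu0 hune
      have hT2 := quot_tendsto (hP2.differentiable one_ne_zero) x hu0 hune
      exact ((hT1.mul tendsto_const_nhds).add (hT2.mul tendsto_const_nhds)).const_mul (K x.2)
  -- limit of the right-hand sides
  have hGlim : Tendsto (fun n => ∫ x in Ioo (0:ℝ) L ×ˢ Ioo (-H) (0:ℝ), K x.2 *
        ((ψ (x.1 + u n, x.2) - ψ x) * (u n)⁻¹) * fderiv ℝ (fun z => fderiv ℝ p z (1,0)) x (0,1)) atTop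
      (𝓝 (∫ x in Ioo (0:ℝ) L ×ˢ Ioo (-H) (0:ℝ),
        K x.2 * fderiv ℝ ψ x (1,0) * fderiv ℝ (fun z => fderiv ℝ p z (1,0)) x (0,1))) := by
    refine tendsto_integral_of_dominated_convergence
      (fun _ => kmax * (C3 * Cb)) (fun n => ?_) (integrable_const _) (fun n => ?_) ?_
    · have hshn : Continuous (fun x : ℝ×ℝ => ((x.1 + u n, x.2) : ℝ×ℝ)) :=
        (continuous_fst.add continuous_const).prodMk continuous_snd
      exact ((((hKmeas.comp measurable_snd).mul
        (((hψc.comp hshn).sub hψc).mul continuous_const).measurable).mul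
          hbc.measurable).aestronglyMeasurable).restrict
    · rw [ae_restrict_iff' (meas_dom L H)]
      refine .of_forall fun x hx => ?_
      have h1 : |(ψ (x.1 + u n, x.2) - ψ x) * (u n)⁻¹
          * fderiv ℝ (fun z => fderiv ℝ p z (1,0)) x (0,1)| ≤ C3 * Cb :=
        absT (hC3 x hx (u n) (hule n)) (hune n) (hCb x hx) hC3nn
      calc ‖K x.2 * ((ψ (x.1 + u n, x.2) - ψ x) * (u n)⁻¹)
            * fderiv ℝ (fun z => fderiv ℝ p z (1,0)) x (0,1)‖
          = |K x.2| * |(ψ (x.1 + u n, x.2) - ψ x) * (u n)⁻¹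
            * fderiv ℝ (fun z => fderiv ℝ p z (1,0)) x (0,1)| := by
            rw [Real.norm_eq_abs, mul_assoc, abs_mul, mul_assoc]
        _ ≤ kmax * (C3 * Cb) := mul_le_mul (hKabs x.2) h1 (abs_nonneg _) hkmax.le
    · refine .of_forall fun x => ?_
      have hTψ := quot_tendsto (hψ.differentiable one_ne_zero) x hu0 hune
      exact ((tendsto_const_nhds.mul hTψ).mul tendsto_const_nhds)
  -- combine
  have hstar := fun n => star_eq (kmin := kmin) hL hKmeas hKabs hp hψ hpper hψper hsol (u n)
  have hFlim' : Tendsto (fun n => ∫ x in Ioo (0:ℝ) L ×ˢ Ioo (-H) (0:ℝ), K x.2 *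
        ((fderiv ℝ p (x.1 + u n, x.2) (1,0) - fderiv ℝ p x (1,0)) * (u n)⁻¹
            * fderiv ℝ (fun z => fderiv ℝ p z (1,0)) x (1,0)
          + (fderiv ℝ p (x.1 + u n, x.2) (0,1) - fderiv ℝ p x (0,1)) * (u n)⁻¹
            * fderiv ℝ (fun z => fderiv ℝ p z (1,0)) x (0,1))) atTop
      (𝓝 (- ∫ x in Ioo (0:ℝ) L ×ˢ Ioo (-H) (0:ℝ),
        K x.2 * fderiv ℝ ψ x (1,0) * fderiv ℝ (fun z => fderiv ℝ p z (1,0)) x (0,1))) := by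
    refine Tendsto.congr (fun n => (hstar n).symm) hGlim.neg
  have hkey := tendsto_nhds_unique hFlim hFlim'
  rw [← hkey]
  refine integral_congr_ae (.of_forall fun x => ?_)
  simp only []
  rw [mixed_symm hp x (0,1) (1,0)]

set_option maxHeartbeats 2000000 in
/-- For the Darcy velocity `u = -K(∇p + ψ e_z)` with `∇·u = 0`, where `p`
solves the associated Neumann elliptic problem and `K = K(z)` is bounded
between `k₋ > 0` and `k₊`, the horizontal derivative
`∂_x u = -K(∂_x ∇p + ∂_x ψ e_z)` satisfies
`‖∂_x u‖_{L²(Ω)} ≤ (2 k₊²/k₋) ‖∂_x ψ‖_{L²(Ω)}`. -/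
theorem stmt5 (L H kmin kmax : ℝ) (hL : 0 < L) (hH : 0 < H)
    (hk : 0 < kmin)
    (K : ℝ → ℝ) (hKmeas : Measurable K)
    (hKbd : ∀ z, kmin ≤ K z ∧ K z ≤ kmax)
    (p ψ : ℝ × ℝ → ℝ) (hp : ContDiff ℝ 2 p) (hψ : ContDiff ℝ 1 ψ)
    (hpper : ∀ x : ℝ × ℝ, p (x.1 + L, x.2) = p x)
    (hψper : ∀ x : ℝ × ℝ, ψ (x.1 + L, x.2) = ψ x)
    (hsol : IsWeakSol L H K p ψ) :
    eLpNorm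
        (fun x : ℝ × ℝ =>
          ‖((-(K x.2) * fderiv ℝ (fun y => fderiv ℝ p y (1, 0)) x (1, 0),
             -(K x.2) * (fderiv ℝ (fun y => fderiv ℝ p y (0, 1)) x (1, 0) +
               fderiv ℝ ψ x (1, 0))) : ℝ × ℝ)‖) 2
        (volume.restrict (Ioo 0 L ×ˢ Ioo (-H) 0)) ≤
      ENNReal.ofReal (2 * kmax ^ 2 / kmin) *
        eLpNorm (fun x => fderiv ℝ ψ x (1, 0)) 2
          (volume.restrict (Ioo 0 L ×ˢ Ioo (-H) 0)) := by
  have hkmax : 0 < kmax := lt_of_lt_of_le hk ((hKbd 0).1.trans (hKbd 0).2)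
  have hkk : kmin ≤ kmax := (hKbd 0).1.trans (hKbd 0).2
  have hKabs : ∀ z, |K z| ≤ kmax := fun z => abs_le.2 ⟨by linarith [(hKbd z).1], (hKbd z).2⟩
  haveI : IsFiniteMeasure (volume.restrict (Ioo (0:ℝ) L ×ˢ Ioo (-H) (0:ℝ))) :=
    ⟨by rw [Measure.restrict_apply_univ]; exact vol_dom_lt L H⟩
  -- abbreviations (purely for readability in the proof of this block)
  have hmb : ∀ x : ℝ × ℝ, fderiv ℝ (fun y => fderiv ℝ p y (0,1)) x (1,0)
      = fderiv ℝ (fun y => fderiv ℝ p y (1,0)) x (0,1) := fun x => mixed_symm hp x (0,1) (1,0)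
  -- replace the mixed derivative
  have hfun : (fun x : ℝ × ℝ =>
      ‖((-(K x.2) * fderiv ℝ (fun y => fderiv ℝ p y (1, 0)) x (1, 0),
         -(K x.2) * (fderiv ℝ (fun y => fderiv ℝ p y (0, 1)) x (1, 0) +
           fderiv ℝ ψ x (1, 0))) : ℝ × ℝ)‖)
      = (fun x : ℝ × ℝ =>
      ‖((-(K x.2) * fderiv ℝ (fun y => fderiv ℝ p y (1, 0)) x (1, 0),
         -(K x.2) * (fderiv ℝ (fun y => fderiv ℝ p y (1, 0)) x (0, 1) +
           fderiv ℝ ψ x (1, 0))) : ℝ × ℝ)‖) := funext fun x => by rw [hmb x]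
  rw [hfun]
  -- continuity facts
  have hP1 : ContDiff ℝ 1 (fun z : ℝ×ℝ => fderiv ℝ p z (1,0)) :=
    contDiff_fderiv_apply hp (by norm_num) (1,0)
  have hac : Continuous (fun x : ℝ×ℝ => fderiv ℝ (fun z : ℝ×ℝ => fderiv ℝ p z (1,0)) x (1,0)) :=
    (contDiff_fderiv_apply hP1 (by norm_num) ((1:ℝ),(0:ℝ)) : ContDiff ℝ 0 _).continuous
  have hbc : Continuous (fun x : ℝ×ℝ => fderiv ℝ (fun z : ℝ×ℝ => fderiv ℝ p z (1,0)) x (0,1)) :=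
    (contDiff_fderiv_apply hP1 (by norm_num) ((0:ℝ),(1:ℝ)) : ContDiff ℝ 0 _).continuous
  have hΨc : Continuous (fun x : ℝ×ℝ => fderiv ℝ ψ x (1,0)) :=
    (contDiff_fderiv_apply hψ (by norm_num) ((1:ℝ),(0:ℝ)) : ContDiff ℝ 0 _).continuous
  obtain ⟨Ca, hCann, hCa⟩ := bddOn_of_continuous (L := L) (H := H) hac
  obtain ⟨Cb, hCbnn, hCb⟩ := bddOn_of_continuous (L := L) (H := H) hbc
  obtain ⟨CΨ, hCΨnn, hCΨ⟩ := bddOn_of_continuous (L := L) (H := H) hΨc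
  have intC : ∀ g : ℝ × ℝ → ℝ, Continuous g →
      IntegrableOn g (Ioo (0:ℝ) L ×ˢ Ioo (-H) (0:ℝ)) := fun g hg => by
    obtain ⟨C, -, hC⟩ := bddOn_of_continuous (L := L) (H := H) hg
    exact integrableOn_of_bdd hg.aestronglyMeasurable hC
  -- the basic L² quantities
  set Sa : ℝ := ∫ x in Ioo (0:ℝ) L ×ˢ Ioo (-H) (0:ℝ),
    (fderiv ℝ (fun y => fderiv ℝ p y (1,0)) x (1,0))^2 with hSa
  set Sb : ℝ := ∫ x in Ioo (0:ℝ) L ×ˢ Ioo (-H) (0:ℝ),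
    (fderiv ℝ (fun y => fderiv ℝ p y (1,0)) x (0,1))^2 with hSb
  set SΨ : ℝ := ∫ x in Ioo (0:ℝ) L ×ˢ Ioo (-H) (0:ℝ), (fderiv ℝ ψ x (1,0))^2 with hSΨ
  have hSa0 : 0 ≤ Sa := setIntegral_nonneg (meas_dom L H) (fun x _ => sq_nonneg _)
  have hSb0 : 0 ≤ Sb := setIntegral_nonneg (meas_dom L H) (fun x _ => sq_nonneg _)
  have hSΨ0 : 0 ≤ SΨ := setIntegral_nonneg (meas_dom L H) (fun x _ => sq_nonneg _)
  set N : ℝ := Real.sqrt (Sa + Sb) with hN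
  set B : ℝ := Real.sqrt Sb with hB
  set P : ℝ := Real.sqrt SΨ with hP
  have hN0 : 0 ≤ N := Real.sqrt_nonneg _
  have hB0 : 0 ≤ B := Real.sqrt_nonneg _
  have hP0 : 0 ≤ P := Real.sqrt_nonneg _
  have hN2 : N^2 = Sa + Sb := Real.sq_sqrt (by linarith)
  have hB2 : B^2 = Sb := Real.sq_sqrt hSb0
  have hP2 : P^2 = SΨ := Real.sq_sqrt hSΨ0
  have hBN : B ≤ N := Real.sqrt_le_sqrt (by linarith)
  -- rpow-pow helper
  have hr2 : ∀ r : ℝ, |r| ^ (2:ℝ) = r^2 := fun r => by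
    rw [show (2:ℝ) = ((2:ℕ) : ℝ) from by norm_num, Real.rpow_natCast, sq_abs]
  -- Cauchy-Schwarz
  have hΨa_mem : MemLp (fun x => |fderiv ℝ ψ x (1,0)|) (ENNReal.ofReal 2)
      (volume.restrict (Ioo (0:ℝ) L ×ˢ Ioo (-H) (0:ℝ))) := by
    refine MemLp.of_bound (hΨc.abs.aestronglyMeasurable).restrict CΨ ?_
    rw [ae_restrict_iff' (meas_dom L H)]
    exact .of_forall fun x hx => by
      simpa [Real.norm_eq_abs, abs_abs] using hCΨ x hx
  have hba_mem : MemLp (fun x => |fderiv ℝ (fun y => fderiv ℝ p y (1,0)) x (0,1)|)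
      (ENNReal.ofReal 2) (volume.restrict (Ioo (0:ℝ) L ×ˢ Ioo (-H) (0:ℝ))) := by
    refine MemLp.of_bound (hbc.abs.aestronglyMeasurable).restrict Cb ?_
    rw [ae_restrict_iff' (meas_dom L H)]
    exact .of_forall fun x hx => by
      simpa [Real.norm_eq_abs, abs_abs] using hCb x hx
  have hCS : (∫ x in Ioo (0:ℝ) L ×ˢ Ioo (-H) (0:ℝ),
      |fderiv ℝ ψ x (1,0)| * |fderiv ℝ (fun y => fderiv ℝ p y (1,0)) x (0,1)|) ≤ P * B := by
    have h := integral_mul_le_Lp_mul_Lq_of_nonneg (p := 2) (q := 2)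
      (μ := volume.restrict (Ioo (0:ℝ) L ×ˢ Ioo (-H) (0:ℝ)))
      ⟨by norm_num, by norm_num, by norm_num⟩
      (f := fun x => |fderiv ℝ ψ x (1,0)|)
      (g := fun x => |fderiv ℝ (fun y => fderiv ℝ p y (1,0)) x (0,1)|)
      (.of_forall fun x => abs_nonneg _) (.of_forall fun x => abs_nonneg _) hΨa_mem hba_mem
    have e1 : (∫ x in Ioo (0:ℝ) L ×ˢ Ioo (-H) (0:ℝ), |fderiv ℝ ψ x (1,0)| ^ (2:ℝ)) = SΨ := by
      rw [hSΨ]; exact integral_congr_ae (.of_forall fun x => hr2 _)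
    have e2 : (∫ x in Ioo (0:ℝ) L ×ˢ Ioo (-H) (0:ℝ),
        |fderiv ℝ (fun y => fderiv ℝ p y (1,0)) x (0,1)| ^ (2:ℝ)) = Sb := by
      rw [hSb]; exact integral_congr_ae (.of_forall fun x => hr2 _)
    rw [e1, e2] at h
    calc (∫ x in Ioo (0:ℝ) L ×ˢ Ioo (-H) (0:ℝ),
        |fderiv ℝ ψ x (1,0)| * |fderiv ℝ (fun y => fderiv ℝ p y (1,0)) x (0,1)|)
        ≤ SΨ ^ (1/(2:ℝ)) * Sb ^ (1/(2:ℝ)) := h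
      _ = P * B := by rw [← Real.sqrt_eq_rpow, ← Real.sqrt_eq_rpow]
  -- K-weighted integrability
  have intK' : ∀ g : ℝ × ℝ → ℝ, Continuous g →
      IntegrableOn (fun x => K x.2 * g x) (Ioo (0:ℝ) L ×ˢ Ioo (-H) (0:ℝ)) := fun g hg => by
    obtain ⟨C, hC0, hC⟩ := bddOn_of_continuous (L := L) (H := H) hg
    refine integrableOn_of_bdd
      ((hKmeas.comp measurable_snd).mul hg.measurable).aestronglyMeasurable (C := kmax * C) ?_
    intro x hx
    rw [abs_mul]
    exact mul_le_mul (hKabs _) (hC x hx) (abs_nonneg _) hkmax.le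
  -- the energy inequality
  have hkey1 : kmin * (Sa + Sb) ≤ kmax * (P * B) := by
    have hstep1 : kmin * (Sa + Sb) ≤ ∫ x in Ioo (0:ℝ) L ×ˢ Ioo (-H) (0:ℝ), K x.2 *
        (fderiv ℝ (fun y => fderiv ℝ p y (1,0)) x (1,0) * fderiv ℝ (fun y => fderiv ℝ p y (1,0)) x (1,0)
          + fderiv ℝ (fun y => fderiv ℝ p y (1,0)) x (0,1) * fderiv ℝ (fun y => fderiv ℝ p y (1,0)) x (0,1)) := by
      have e : kmin * (Sa + Sb) = ∫ x in Ioo (0:ℝ) L ×ˢ Ioo (-H) (0:ℝ),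
          kmin * ((fderiv ℝ (fun y => fderiv ℝ p y (1,0)) x (1,0))^2
            + (fderiv ℝ (fun y => fderiv ℝ p y (1,0)) x (0,1))^2) := by
        rw [integral_const_mul, integral_add (f := fun x => fderiv ℝ (fun y => fderiv ℝ p y (1,0)) x (1,0) ^ 2) (g := fun x => fderiv ℝ (fun y => fderiv ℝ p y (1,0)) x (0,1) ^ 2) (intC _ (hac.pow 2)) (intC _ (hbc.pow 2)), hSa, hSb]
      rw [e]
      refine setIntegral_mono_on
        (intC _ (continuous_const.mul ((hac.pow 2).add (hbc.pow 2))))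
        (intK' _ ((hac.mul hac).add (hbc.mul hbc))) (meas_dom L H) (fun x hx => ?_)
      have h1 := (hKbd x.2).1
      nlinarith [sq_nonneg (fderiv ℝ (fun y => fderiv ℝ p y (1,0)) x (1,0)),
        sq_nonneg (fderiv ℝ (fun y => fderiv ℝ p y (1,0)) x (0,1))]
    have hstep2 := core hL hH hk hKmeas hKbd hp hψ hpper hψper hsol
    have hstep3 : (- ∫ x in Ioo (0:ℝ) L ×ˢ Ioo (-H) (0:ℝ),
        K x.2 * fderiv ℝ ψ x (1,0) * fderiv ℝ (fun y => fderiv ℝ p y (1,0)) x (0,1))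
        ≤ kmax * (P * B) := by
      rw [← integral_neg]
      have hmono : (∫ x in Ioo (0:ℝ) L ×ˢ Ioo (-H) (0:ℝ),
          -(K x.2 * fderiv ℝ ψ x (1,0) * fderiv ℝ (fun y => fderiv ℝ p y (1,0)) x (0,1)))
          ≤ ∫ x in Ioo (0:ℝ) L ×ˢ Ioo (-H) (0:ℝ),
            kmax * (|fderiv ℝ ψ x (1,0)| * |fderiv ℝ (fun y => fderiv ℝ p y (1,0)) x (0,1)|) := by
        refine setIntegral_mono_on ?_ (intC _ (continuous_const.mul (hΨc.abs.mul hbc.abs)))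
          (meas_dom L H) (fun x hx => ?_)
        · refine IntegrableOn.congr_fun ((intK' _ (hΨc.mul hbc)).neg)
            (fun x _ => by simp only [Pi.neg_apply, Pi.mul_apply]; ring) (meas_dom L H)
        · refine (neg_le_abs _).trans ?_
          rw [abs_mul, abs_mul]
          calc |K x.2| * |fderiv ℝ ψ x (1,0)| * |fderiv ℝ (fun y => fderiv ℝ p y (1,0)) x (0,1)|
              ≤ kmax * |fderiv ℝ ψ x (1,0)| * |fderiv ℝ (fun y => fderiv ℝ p y (1,0)) x (0,1)| :=
                mul_le_mul_of_nonneg_right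
                  (mul_le_mul_of_nonneg_right (hKabs x.2) (abs_nonneg _)) (abs_nonneg _)
            _ = kmax * (|fderiv ℝ ψ x (1,0)| * |fderiv ℝ (fun y => fderiv ℝ p y (1,0)) x (0,1)|) := by
                ring
      refine hmono.trans ?_
      rw [integral_const_mul]
      exact mul_le_mul_of_nonneg_left hCS hkmax.le
    calc kmin * (Sa + Sb) ≤ _ := hstep1
      _ = _ := hstep2
      _ ≤ kmax * (P * B) := hstep3
  have hNkey : kmin * N ≤ kmax * P := by
    rcases hN0.eq_or_lt with h0 | hNpos
    · rw [← h0, mul_zero]; positivity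
    · refine le_of_mul_le_mul_right ?_ hNpos
      have hPBN : kmax * (P * B) ≤ kmax * P * N := by
        rw [mul_assoc]
        exact mul_le_mul_of_nonneg_left (mul_le_mul_of_nonneg_left hBN hP0) hkmax.le
      nlinarith [hkey1, hN2]
  -- boundedness of the velocity integrand
  have hFgb : ∀ x ∈ Ioo (0:ℝ) L ×ˢ Ioo (-H) (0:ℝ),
      ‖((-(K x.2) * fderiv ℝ (fun y => fderiv ℝ p y (1,0)) x (1,0),
        -(K x.2) * (fderiv ℝ (fun y => fderiv ℝ p y (1,0)) x (0,1) + fderiv ℝ ψ x (1,0))) : ℝ×ℝ)‖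
        ≤ kmax * Ca + kmax * (Cb + CΨ) := by
    intro x hx
    rw [Prod.norm_def]
    have hcb : 0 ≤ kmax * (Cb + CΨ) := by positivity
    have hca : 0 ≤ kmax * Ca := by positivity
    refine max_le ?_ ?_
    · have : ‖-(K x.2) * fderiv ℝ (fun y => fderiv ℝ p y (1,0)) x (1,0)‖
          = |K x.2| * |fderiv ℝ (fun y => fderiv ℝ p y (1,0)) x (1,0)| := by
        rw [Real.norm_eq_abs, abs_mul, abs_neg]
      rw [this]
      have := mul_le_mul (hKabs x.2) (hCa x hx) (abs_nonneg _) hkmax.le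
      linarith
    · have : ‖-(K x.2) * (fderiv ℝ (fun y => fderiv ℝ p y (1,0)) x (0,1) + fderiv ℝ ψ x (1,0))‖
          = |K x.2| * |fderiv ℝ (fun y => fderiv ℝ p y (1,0)) x (0,1) + fderiv ℝ ψ x (1,0)| := by
        rw [Real.norm_eq_abs, abs_mul, abs_neg]
      rw [this]
      have habs : |fderiv ℝ (fun y => fderiv ℝ p y (1,0)) x (0,1) + fderiv ℝ ψ x (1,0)| ≤ Cb + CΨ :=
        (abs_add_le _ _).trans (add_le_add (hCb x hx) (hCΨ x hx))
      have := mul_le_mul (hKabs x.2) habs (abs_nonneg _) hkmax.le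
      linarith
  have hFmeas : Measurable (fun x : ℝ×ℝ =>
      ‖((-(K x.2) * fderiv ℝ (fun y => fderiv ℝ p y (1,0)) x (1,0),
        -(K x.2) * (fderiv ℝ (fun y => fderiv ℝ p y (1,0)) x (0,1) + fderiv ℝ ψ x (1,0))) : ℝ×ℝ)‖) :=
    (((hKmeas.comp measurable_snd).neg.mul hac.measurable).prodMk
      ((hKmeas.comp measurable_snd).neg.mul (hbc.add hΨc).measurable)).norm
  have hFg_mem : MemLp (fun x : ℝ×ℝ =>
      ‖((-(K x.2) * fderiv ℝ (fun y => fderiv ℝ p y (1,0)) x (1,0),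
        -(K x.2) * (fderiv ℝ (fun y => fderiv ℝ p y (1,0)) x (0,1) + fderiv ℝ ψ x (1,0))) : ℝ×ℝ)‖)
      2 (volume.restrict (Ioo (0:ℝ) L ×ˢ Ioo (-H) (0:ℝ))) := by
    refine MemLp.of_bound hFmeas.aestronglyMeasurable.restrict (kmax * Ca + kmax * (Cb + CΨ)) ?_
    rw [ae_restrict_iff' (meas_dom L H)]
    exact .of_forall fun x hx => by rw [norm_norm]; exact hFgb x hx
  have hΨ_mem : MemLp (fun x : ℝ×ℝ => fderiv ℝ ψ x (1,0)) 2
      (volume.restrict (Ioo (0:ℝ) L ×ˢ Ioo (-H) (0:ℝ))) := by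
    refine MemLp.of_bound hΨc.aestronglyMeasurable.restrict CΨ ?_
    rw [ae_restrict_iff' (meas_dom L H)]
    exact .of_forall fun x hx => by rw [Real.norm_eq_abs]; exact hCΨ x hx
  rw [hFg_mem.eLpNorm_eq_integral_rpow_norm two_ne_zero ENNReal.ofNat_ne_top,
    hΨ_mem.eLpNorm_eq_integral_rpow_norm two_ne_zero ENNReal.ofNat_ne_top]
  simp only [ENNReal.toReal_ofNat]
  rw [← ENNReal.ofReal_mul (by positivity : (0:ℝ) ≤ 2 * kmax ^ 2 / kmin)]
  refine ENNReal.ofReal_le_ofReal ?_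
  have hr2' : ∀ r : ℝ, 0 ≤ r → r ^ (2:ℝ) = r ^ 2 := fun r hr => by
    rw [← abs_of_nonneg hr, hr2, sq_abs]
  have eF : (∫ x in Ioo (0:ℝ) L ×ˢ Ioo (-H) (0:ℝ),
      ‖(‖((-(K x.2) * fderiv ℝ (fun y => fderiv ℝ p y (1,0)) x (1,0),
        -(K x.2) * (fderiv ℝ (fun y => fderiv ℝ p y (1,0)) x (0,1) + fderiv ℝ ψ x (1,0))) : ℝ×ℝ)‖ : ℝ)‖ ^ (2:ℝ))
      = ∫ x in Ioo (0:ℝ) L ×ˢ Ioo (-H) (0:ℝ),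
      ‖((-(K x.2) * fderiv ℝ (fun y => fderiv ℝ p y (1,0)) x (1,0),
        -(K x.2) * (fderiv ℝ (fun y => fderiv ℝ p y (1,0)) x (0,1) + fderiv ℝ ψ x (1,0))) : ℝ×ℝ)‖ ^ 2 :=
    integral_congr_ae (.of_forall fun x => by simp only []; rw [norm_norm, hr2' _ (norm_nonneg _)])
  have eΨ : (∫ x in Ioo (0:ℝ) L ×ˢ Ioo (-H) (0:ℝ), ‖fderiv ℝ ψ x (1,0)‖ ^ (2:ℝ)) = SΨ := by
    rw [hSΨ]
    exact integral_congr_ae (.of_forall fun x => by simp only []; rw [Real.norm_eq_abs, hr2])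
  rw [eF, eΨ, show ((2:ℝ))⁻¹ = 1/2 from (one_div (2:ℝ)).symm, ← Real.sqrt_eq_rpow,
    ← Real.sqrt_eq_rpow, ← hP]
  -- bound the square integral
  have hbΨint : (∫ x in Ioo (0:ℝ) L ×ˢ Ioo (-H) (0:ℝ),
      fderiv ℝ (fun y => fderiv ℝ p y (1,0)) x (0,1) * fderiv ℝ ψ x (1,0)) ≤ P * B := by
    refine (setIntegral_mono_on (intC _ (hbc.mul hΨc)) (intC _ (hΨc.abs.mul hbc.abs))
      (meas_dom L H) fun x hx => ?_).trans hCS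
    calc fderiv ℝ (fun y => fderiv ℝ p y (1,0)) x (0,1) * fderiv ℝ ψ x (1,0)
        ≤ |fderiv ℝ (fun y => fderiv ℝ p y (1,0)) x (0,1) * fderiv ℝ ψ x (1,0)| := le_abs_self _
      _ = |fderiv ℝ ψ x (1,0)| * |fderiv ℝ (fun y => fderiv ℝ p y (1,0)) x (0,1)| := by
          rw [abs_mul, mul_comm]
  have intFg2 : IntegrableOn (fun x : ℝ×ℝ =>
      ‖((-(K x.2) * fderiv ℝ (fun y => fderiv ℝ p y (1,0)) x (1,0),
        -(K x.2) * (fderiv ℝ (fun y => fderiv ℝ p y (1,0)) x (0,1) + fderiv ℝ ψ x (1,0))) : ℝ×ℝ)‖ ^ 2)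
      (Ioo (0:ℝ) L ×ˢ Ioo (-H) (0:ℝ)) := by
    refine integrableOn_of_bdd ((hFmeas.pow_const 2).aestronglyMeasurable)
      (C := (kmax * Ca + kmax * (Cb + CΨ))^2) fun x hx => ?_
    rw [abs_of_nonneg (sq_nonneg _)]
    exact pow_le_pow_left₀ (norm_nonneg _) (hFgb x hx) 2
  have hFsq : (∫ x in Ioo (0:ℝ) L ×ˢ Ioo (-H) (0:ℝ),
      ‖((-(K x.2) * fderiv ℝ (fun y => fderiv ℝ p y (1,0)) x (1,0),
        -(K x.2) * (fderiv ℝ (fun y => fderiv ℝ p y (1,0)) x (0,1) + fderiv ℝ ψ x (1,0))) : ℝ×ℝ)‖ ^ 2)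
      ≤ kmax^2 * (N + P)^2 := by
    have step1 : (∫ x in Ioo (0:ℝ) L ×ˢ Ioo (-H) (0:ℝ),
        ‖((-(K x.2) * fderiv ℝ (fun y => fderiv ℝ p y (1,0)) x (1,0),
          -(K x.2) * (fderiv ℝ (fun y => fderiv ℝ p y (1,0)) x (0,1) + fderiv ℝ ψ x (1,0))) : ℝ×ℝ)‖ ^ 2)
        ≤ ∫ x in Ioo (0:ℝ) L ×ˢ Ioo (-H) (0:ℝ),
          kmax^2 * ((fderiv ℝ (fun y => fderiv ℝ p y (1,0)) x (1,0))^2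
            + (fderiv ℝ (fun y => fderiv ℝ p y (1,0)) x (0,1) + fderiv ℝ ψ x (1,0))^2) := by
      refine setIntegral_mono_on intFg2
        (intC _ (continuous_const.mul ((hac.pow 2).add ((hbc.add hΨc).pow 2))))
        (meas_dom L H) fun x hx => ?_
      have hK2 : (K x.2)^2 ≤ kmax^2 := by
        nlinarith [hKabs x.2, abs_nonneg (K x.2), sq_abs (K x.2)]
      have hmax : ‖((-(K x.2) * fderiv ℝ (fun y => fderiv ℝ p y (1,0)) x (1,0),
          -(K x.2) * (fderiv ℝ (fun y => fderiv ℝ p y (1,0)) x (0,1) + fderiv ℝ ψ x (1,0))) : ℝ×ℝ)‖ ^ 2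
          ≤ (-(K x.2) * fderiv ℝ (fun y => fderiv ℝ p y (1,0)) x (1,0))^2
            + (-(K x.2) * (fderiv ℝ (fun y => fderiv ℝ p y (1,0)) x (0,1) + fderiv ℝ ψ x (1,0)))^2 := by
        rw [Prod.norm_def]
        rcases max_cases (‖-(K x.2) * fderiv ℝ (fun y => fderiv ℝ p y (1,0)) x (1,0)‖)
          (‖-(K x.2) * (fderiv ℝ (fun y => fderiv ℝ p y (1,0)) x (0,1) + fderiv ℝ ψ x (1,0))‖) with
          ⟨h, -⟩ | ⟨h, -⟩ <;> rw [h, Real.norm_eq_abs, sq_abs] <;>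
          nlinarith [sq_nonneg (-(K x.2) * fderiv ℝ (fun y => fderiv ℝ p y (1,0)) x (1,0)),
            sq_nonneg (-(K x.2) * (fderiv ℝ (fun y => fderiv ℝ p y (1,0)) x (0,1) + fderiv ℝ ψ x (1,0)))]
      refine hmax.trans ?_
      have e : (-(K x.2) * fderiv ℝ (fun y => fderiv ℝ p y (1,0)) x (1,0))^2
          + (-(K x.2) * (fderiv ℝ (fun y => fderiv ℝ p y (1,0)) x (0,1) + fderiv ℝ ψ x (1,0)))^2
          = (K x.2)^2 * ((fderiv ℝ (fun y => fderiv ℝ p y (1,0)) x (1,0))^2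
            + (fderiv ℝ (fun y => fderiv ℝ p y (1,0)) x (0,1) + fderiv ℝ ψ x (1,0))^2) := by ring
      rw [e]
      exact mul_le_mul_of_nonneg_right hK2 (by positivity)
    have step2 : (∫ x in Ioo (0:ℝ) L ×ˢ Ioo (-H) (0:ℝ),
        kmax^2 * ((fderiv ℝ (fun y => fderiv ℝ p y (1,0)) x (1,0))^2
          + (fderiv ℝ (fun y => fderiv ℝ p y (1,0)) x (0,1) + fderiv ℝ ψ x (1,0))^2))
        = kmax^2 * (Sa + (Sb + 2 * (∫ x in Ioo (0:ℝ) L ×ˢ Ioo (-H) (0:ℝ),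
            fderiv ℝ (fun y => fderiv ℝ p y (1,0)) x (0,1) * fderiv ℝ ψ x (1,0)) + SΨ)) := by
      rw [integral_const_mul]
      congr 1
      rw [integral_add (f := fun x => fderiv ℝ (fun y => fderiv ℝ p y (1,0)) x (1,0) ^ 2) (g := fun x => (fderiv ℝ (fun y => fderiv ℝ p y (1,0)) x (0,1) + fderiv ℝ ψ x (1,0)) ^ 2) (intC _ (hac.pow 2)) (intC _ ((hbc.add hΨc).pow 2))]
      congr 1
      have e : (fun x : ℝ×ℝ => (fderiv ℝ (fun y => fderiv ℝ p y (1,0)) x (0,1) + fderiv ℝ ψ x (1,0))^2)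
            = (fun x : ℝ×ℝ => (fderiv ℝ (fun y => fderiv ℝ p y (1,0)) x (0,1))^2
              + (2 * (fderiv ℝ (fun y => fderiv ℝ p y (1,0)) x (0,1) * fderiv ℝ ψ x (1,0))
                + (fderiv ℝ ψ x (1,0))^2)) := funext fun x => by ring
      rw [e, integral_add (f := fun x => fderiv ℝ (fun y => fderiv ℝ p y (1,0)) x (0,1) ^ 2) (g := fun x => 2 * (fderiv ℝ (fun y => fderiv ℝ p y (1,0)) x (0,1) * fderiv ℝ ψ x (1,0)) + fderiv ℝ ψ x (1,0) ^ 2) (intC _ (hbc.pow 2))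
          (intC _ ((continuous_const.mul (hbc.mul hΨc)).add (hΨc.pow 2))),
        integral_add (f := fun x => 2 * (fderiv ℝ (fun y => fderiv ℝ p y (1,0)) x (0,1) * fderiv ℝ ψ x (1,0))) (g := fun x => fderiv ℝ ψ x (1,0) ^ 2) (intC _ (continuous_const.mul (hbc.mul hΨc))) (intC _ (hΨc.pow 2)),
        integral_const_mul]
      rw [← hSb, ← hSΨ]
      ring
    calc (∫ x in Ioo (0:ℝ) L ×ˢ Ioo (-H) (0:ℝ),
        ‖((-(K x.2) * fderiv ℝ (fun y => fderiv ℝ p y (1,0)) x (1,0),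
          -(K x.2) * (fderiv ℝ (fun y => fderiv ℝ p y (1,0)) x (0,1) + fderiv ℝ ψ x (1,0))) : ℝ×ℝ)‖ ^ 2)
        ≤ _ := step1
      _ = _ := step2
      _ ≤ kmax^2 * (Sa + (Sb + 2 * (P * B) + SΨ)) := by
          refine mul_le_mul_of_nonneg_left ?_ (by positivity)
          have := hbΨint
          nlinarith
      _ ≤ kmax^2 * (N + P)^2 := by
          refine mul_le_mul_of_nonneg_left ?_ (by positivity)
          nlinarith [hN2, hP2, mul_le_mul_of_nonneg_left hBN hP0]
  calc Real.sqrt (∫ x in Ioo (0:ℝ) L ×ˢ Ioo (-H) (0:ℝ),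
      ‖((-(K x.2) * fderiv ℝ (fun y => fderiv ℝ p y (1,0)) x (1,0),
        -(K x.2) * (fderiv ℝ (fun y => fderiv ℝ p y (1,0)) x (0,1) + fderiv ℝ ψ x (1,0))) : ℝ×ℝ)‖ ^ 2)
      ≤ Real.sqrt (kmax^2 * (N + P)^2) := Real.sqrt_le_sqrt hFsq
    _ = kmax * (N + P) := by
        rw [show kmax^2 * (N + P)^2 = (kmax * (N + P))^2 from by ring,
          Real.sqrt_sq (by positivity)]
    _ ≤ 2 * kmax ^ 2 / kmin * P := by
        rw [div_mul_eq_mul_div, le_div_iff₀ hk]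
        nlinarith [mul_le_mul_of_nonneg_left hNkey hkmax.le,
          mul_le_mul_of_nonneg_left (mul_le_mul_of_nonneg_right hkk hP0) hkmax.le]
end

section
/- Let (X, d) be a complete metric space and {S(t)}_{t≥0} a semigroup of continuous maps on X possessing a compact invariant set A (S(t)A = A for all t) and a bounded absorbing set B ⊇ A whose forward images converge to an attractor A₀ of a second semigroup {S₀(t)}: d_H(S₀(T)B, A₀) → 0 as T → ∞, where d_H is the Hausdorff semidistance. Suppose for every T > 0 and every b ∈ B, d(S_ε(T)b, S₀(T)b) ≤ φ(ε, T) with φ(ε, T) → 0 as ε → 0⁺ for fixed T, and each S_ε has a global attractor A_ε ⊆ B that is S_ε-invariant. Then d_H(A_ε, A₀) → 0 as ε → 0⁺. -/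
open Filter Topology MeasureTheory
open scoped ENNReal

/-- Hausdorff semidistance `d_H(A, B) = sup_{a ∈ A} inf_{b ∈ B} d(a, b)`,
valued in `ℝ≥0∞`. -/
noncomputable def hausSemidist {X : Type*} [PseudoEMetricSpace X] (A B : Set X) : ℝ≥0∞ :=
  ⨆ a ∈ A, EMetric.infEdist a B

/-!
Fix `T`. By invariance `A_ε = S_ε(T) A_ε ⊆ S_ε(T) B`, and moving each point of `S_ε(T) B`
to the corresponding point of `S₀(T) B` costs at most `φ(ε, T)`, so
`d_H(A_ε, A₀) ≤ φ(ε, T) + d_H(S₀(T) B, A₀)`. Choose `T` large to make the second term small,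
then `ε` small to make the first one small.
-/

section HausSemidist

variable {X : Type*} [PseudoEMetricSpace X]

theorem hausSemidist_le_iff {A C : Set X} {r : ℝ≥0∞} :
    hausSemidist A C ≤ r ↔ ∀ a ∈ A, Metric.infEDist a C ≤ r :=
  iSup₂_le_iff

theorem infEDist_le_hausSemidist {A : Set X} {a : X} (ha : a ∈ A) (C : Set X) :
    Metric.infEDist a C ≤ hausSemidist A C :=
  le_iSup₂ (f := fun x (_ : x ∈ A) => Metric.infEDist x C) a ha

theorem hausSemidist_mono_left {A A' : Set X} (h : A ⊆ A') (C : Set X) :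
    hausSemidist A C ≤ hausSemidist A' C :=
  biSup_mono h

theorem hausSemidist_le_of_image_eq {f : X → X} {A B : Set X} (hA : f '' A = A) (hAB : A ⊆ B)
    (C : Set X) : hausSemidist A C ≤ hausSemidist (f '' B) C :=
  hA ▸ hausSemidist_mono_left (Set.image_mono hAB) C

theorem hausSemidist_image_le_add {α : Type*} {f g : α → X} {s : Set α} {r : ℝ≥0∞}
    (h : ∀ x ∈ s, edist (f x) (g x) ≤ r) (C : Set X) :
    hausSemidist (f '' s) C ≤ r + hausSemidist (g '' s) C := by
  refine hausSemidist_le_iff.2 ?_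
  rintro _ ⟨x, hx, rfl⟩
  calc Metric.infEDist (f x) C ≤ edist (f x) (g x) + Metric.infEDist (g x) C :=
        Metric.infEDist_le_edist_add_infEDist
    _ ≤ r + hausSemidist (g '' s) C :=
        add_le_add (h x hx) (infEDist_le_hausSemidist (Set.mem_image_of_mem g hx) C)

end HausSemidist

theorem ENNReal.tendsto_zero_of_le_add {α β : Type*} {l : Filter α} {l' : Filter β} [l'.NeBot]
    {u : α → ℝ≥0∞} {v : α → β → ℝ≥0∞} {w : β → ℝ≥0∞}
    (hv : ∀ᶠ T in l', Tendsto (v · T) l (𝓝 0)) (hw : Tendsto w l' (𝓝 0))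
    (hle : ∀ᶠ T in l', ∀ᶠ a in l, u a ≤ v a T + w T) : Tendsto u l (𝓝 0) := by
  refine ENNReal.tendsto_nhds_zero.2 fun δ hδ => ?_
  have hδ2 : 0 < δ / 2 := ENNReal.half_pos hδ.ne'
  obtain ⟨T, hvT, hwT, hleT⟩ :=
    (hv.and ((ENNReal.tendsto_nhds_zero.1 hw _ hδ2).and hle)).exists
  filter_upwards [ENNReal.tendsto_nhds_zero.1 hvT _ hδ2, hleT] with a hva hua
  calc u a ≤ v a T + w T := hua
    _ ≤ δ / 2 + δ / 2 := add_le_add hva hwT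
    _ = δ := ENNReal.add_halves δ

theorem stmt10_general {X : Type*} [MetricSpace X]
    (S : ℝ → ℝ → X → X) (S₀ : ℝ → X → X)
    (A₀ B : Set X) (Aε : ℝ → Set X) (φ : ℝ → ℝ → ℝ)
    (hattr : Tendsto (fun T => hausSemidist (S₀ T '' B) A₀) atTop (𝓝 0))
    (hφ : ∀ T > (0 : ℝ), ∀ ε > (0 : ℝ), ∀ b ∈ B, dist (S ε T b) (S₀ T b) ≤ φ ε T)
    (hφ0 : ∀ T > (0 : ℝ), Tendsto (fun ε => φ ε T) (𝓝[>] 0) (𝓝 0))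
    (hAsub : ∀ ε > (0 : ℝ), Aε ε ⊆ B)
    (hAinv : ∀ ε > (0 : ℝ), ∀ t ≥ (0 : ℝ), S ε t '' Aε ε = Aε ε) :
    Tendsto (fun ε => hausSemidist (Aε ε) A₀) (𝓝[>] 0) (𝓝 0) := by
  refine ENNReal.tendsto_zero_of_le_add (v := fun ε T => ENNReal.ofReal (φ ε T)) ?_ hattr ?_
  · filter_upwards [eventually_gt_atTop 0] with T hT
    simpa using ENNReal.tendsto_ofReal (hφ0 T hT)
  · filter_upwards [eventually_gt_atTop 0] with T hT
    filter_upwards [self_mem_nhdsWithin] with ε hε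
    calc hausSemidist (Aε ε) A₀ ≤ hausSemidist (S ε T '' B) A₀ :=
          hausSemidist_le_of_image_eq (hAinv ε hε T hT.le) (hAsub ε hε) A₀
      _ ≤ ENNReal.ofReal (φ ε T) + hausSemidist (S₀ T '' B) A₀ :=
          hausSemidist_image_le_add (fun b hb =>
            have h := hφ T hT ε hε b hb
            (edist_le_ofReal (dist_nonneg.trans h)).2 h) A₀

/-- Upper semicontinuity of global attractors: if the perturbed semigroups
`S ε` converge to `S₀` uniformly on the common bounded absorbing set `B` over
finite times, the forward images `S₀(T) B` converge to the attractor `A₀` of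
the limit semigroup, and each `S ε` has a compact invariant global attractor
`Aε ε ⊆ B`, then `d_H(Aε ε, A₀) → 0` as `ε → 0⁺`. -/
theorem stmt10 {X : Type*} [MetricSpace X] [CompleteSpace X]
    (S : ℝ → ℝ → X → X) (S₀ : ℝ → X → X)
    (A₀ B : Set X) (Aε : ℝ → Set X) (φ : ℝ → ℝ → ℝ)
    (hA₀ : A₀.Nonempty) (hA₀comp : IsCompact A₀)
    (hB : Bornology.IsBounded B) (hA₀B : A₀ ⊆ B)
    (hcont : ∀ ε > (0 : ℝ), ∀ t ≥ (0 : ℝ), Continuous (S ε t))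
    (hsemi : ∀ ε > (0 : ℝ), (∀ x, S ε 0 x = x) ∧
      ∀ s ≥ (0 : ℝ), ∀ t ≥ (0 : ℝ), ∀ x, S ε (s + t) x = S ε s (S ε t x))
    (hattr : Tendsto (fun T => hausSemidist (S₀ T '' B) A₀) atTop (𝓝 0))
    (hφ : ∀ T > (0 : ℝ), ∀ ε > (0 : ℝ), ∀ b ∈ B, dist (S ε T b) (S₀ T b) ≤ φ ε T)
    (hφ0 : ∀ T > (0 : ℝ), Tendsto (fun ε => φ ε T) (𝓝[>] 0) (𝓝 0))
    (hAcomp : ∀ ε > (0 : ℝ), IsCompact (Aε ε))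
    (hAsub : ∀ ε > (0 : ℝ), Aε ε ⊆ B)
    (hAinv : ∀ ε > (0 : ℝ), ∀ t ≥ (0 : ℝ), S ε t '' Aε ε = Aε ε) :
    Tendsto (fun ε => hausSemidist (Aε ε) A₀) (𝓝[>] 0) (𝓝 0) :=
  stmt10_general S S₀ A₀ B Aε φ hattr hφ hφ0 hAsub hAinv
end

section
/- Let Ω = (0,L)×(-H,0) and let 0 < δ < H/2, c_Δ > 0, and d₊ ≥ D(x) ≥ d₋ > 0. Suppose φ_b'' is supported in Ω_δ (the two boundary strips of width δ) with |φ_b''| ≤ 2c_Δ/δ², and ψ ∈ H¹(Ω) vanishes at z = 0 and z = -H. Then |∫_Ω D φ_b'' ψ dx| ≤ (1/4) d₋ ‖∇ψ‖²_{L²(Ω)} + 4 c_Δ² L d₊² / (δ d₋). -/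
open Set MeasureTheory


/-- Weighted FTC bound, left-anchored: if `u a = 0` then
`∫_{(a,b)} |u| ≤ ∫_{(a,b)} (b-z)|g z|`. -/
lemma aux_left {a b : ℝ} (hab : a < b) {u g : ℝ → ℝ} (hg : Continuous g)
    (hu : ∀ z, HasDerivAt u (g z) z) (hua : u a = 0) :
    ∫ z in Ioo a b, |u z| ≤ ∫ z in Ioo a b, (b - z) * |g z| := by
  have hga : Continuous fun t => |g t| := hg.abs
  set v : ℝ → ℝ := fun z => ∫ t in a..z, |g t| with hv_def
  have hv : ∀ z, HasDerivAt v |g z| z := by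
    intro z
    exact intervalIntegral.integral_hasDerivAt_right (hga.intervalIntegrable a z)
      hga.stronglyMeasurable.stronglyMeasurableAtFilter hga.continuousAt
  have hucont : Continuous u := by
    rw [continuous_iff_continuousAt]; exact fun z => (hu z).continuousAt
  have hvcont : Continuous v := by
    rw [continuous_iff_continuousAt]; exact fun z => (hv z).continuousAt
  have hub : ∀ z ∈ Ioo a b, |u z| ≤ v z := by
    intro z hz
    have h1 : ∫ t in a..z, g t = u z - u a :=
      intervalIntegral.integral_eq_sub_of_hasDerivAt (fun t _ => hu t)
        (hg.intervalIntegrable a z)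
    have h2 : |∫ t in a..z, g t| ≤ ∫ t in a..z, |g t| :=
      intervalIntegral.abs_integral_le_integral_abs hz.1.le
    rw [h1, hua, sub_zero] at h2
    exact h2
  have hintu : IntegrableOn (fun z => |u z|) (Ioo a b) :=
    ((hucont.abs.continuousOn).integrableOn_compact isCompact_Icc).mono_set Ioo_subset_Icc_self
  have hintv : IntegrableOn v (Ioo a b) :=
    ((hvcont.continuousOn).integrableOn_compact isCompact_Icc).mono_set Ioo_subset_Icc_self
  have step1 : ∫ z in Ioo a b, |u z| ≤ ∫ z in Ioo a b, v z :=
    setIntegral_mono_on hintu hintv measurableSet_Ioo hub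
  have ibp : ∫ z in a..b, v z * 1 =
      v b * (b - b) - v a * (a - b) - ∫ z in a..b, |g z| * (z - b) := by
    exact intervalIntegral.integral_mul_deriv_eq_deriv_mul
      (fun z _ => hv z) (fun z _ => (hasDerivAt_id z).sub_const b)
      (hga.intervalIntegrable a b) (intervalIntegrable_const)
  have hva : v a = 0 := intervalIntegral.integral_same
  have step2 : ∫ z in Ioo a b, v z = ∫ z in Ioo a b, (b - z) * |g z| := by
    have e1 : ∫ z in Ioo a b, v z = ∫ z in a..b, v z := by
      rw [intervalIntegral.integral_of_le hab.le, integral_Ioc_eq_integral_Ioo]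
    have e2 : ∫ z in Ioo a b, (b - z) * |g z| = ∫ z in a..b, (b - z) * |g z| := by
      rw [intervalIntegral.integral_of_le hab.le, integral_Ioc_eq_integral_Ioo]
    rw [e1, e2]
    have e3 : ∫ z in a..b, v z = ∫ z in a..b, v z * 1 := by simp
    rw [e3, ibp, hva]
    have e4 : ∫ z in a..b, |g z| * (z - b) = - ∫ z in a..b, (b - z) * |g z| := by
      rw [← intervalIntegral.integral_neg]
      congr 1; ext z; ring
    rw [e4]; ring
  linarith [step1, step2.le, step2.ge]

/-- Weighted FTC bound, right-anchored. -/
lemma aux_right {a b : ℝ} (hab : a < b) {u g : ℝ → ℝ} (hg : Continuous g)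
    (hu : ∀ z, HasDerivAt u (g z) z) (hub : u b = 0) :
    ∫ z in Ioo a b, |u z| ≤ ∫ z in Ioo a b, (z - a) * |g z| := by
  have hga : Continuous fun t => |g t| := hg.abs
  set v : ℝ → ℝ := fun z => ∫ t in z..b, |g t| with hv_def
  have hv : ∀ z, HasDerivAt v (-|g z|) z := by
    intro z
    exact intervalIntegral.integral_hasDerivAt_left (hga.intervalIntegrable z b)
      hga.stronglyMeasurable.stronglyMeasurableAtFilter hga.continuousAt
  have hucont : Continuous u := by
    rw [continuous_iff_continuousAt]; exact fun z => (hu z).continuousAt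
  have hvcont : Continuous v := by
    rw [continuous_iff_continuousAt]; exact fun z => (hv z).continuousAt
  have hble : ∀ z ∈ Ioo a b, |u z| ≤ v z := by
    intro z hz
    have h1 : ∫ t in z..b, g t = u b - u z :=
      intervalIntegral.integral_eq_sub_of_hasDerivAt (fun t _ => hu t)
        (hg.intervalIntegrable z b)
    have h2 : |∫ t in z..b, g t| ≤ ∫ t in z..b, |g t| :=
      intervalIntegral.abs_integral_le_integral_abs hz.2.le
    rw [h1, hub, zero_sub, abs_neg] at h2
    exact h2
  have hintu : IntegrableOn (fun z => |u z|) (Ioo a b) :=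
    ((hucont.abs.continuousOn).integrableOn_compact isCompact_Icc).mono_set Ioo_subset_Icc_self
  have hintv : IntegrableOn v (Ioo a b) :=
    ((hvcont.continuousOn).integrableOn_compact isCompact_Icc).mono_set Ioo_subset_Icc_self
  have step1 : ∫ z in Ioo a b, |u z| ≤ ∫ z in Ioo a b, v z :=
    setIntegral_mono_on hintu hintv measurableSet_Ioo hble
  have ibp : ∫ z in a..b, v z * 1 =
      v b * (b - a) - v a * (a - a) - ∫ z in a..b, (-|g z|) * (z - a) := by
    exact intervalIntegral.integral_mul_deriv_eq_deriv_mul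
      (fun z _ => hv z) (fun z _ => (hasDerivAt_id z).sub_const a)
      ((hga.intervalIntegrable a b).neg) (intervalIntegrable_const)
  have hvb : v b = 0 := intervalIntegral.integral_same
  have step2 : ∫ z in Ioo a b, v z = ∫ z in Ioo a b, (z - a) * |g z| := by
    have e1 : ∫ z in Ioo a b, v z = ∫ z in a..b, v z := by
      rw [intervalIntegral.integral_of_le hab.le, integral_Ioc_eq_integral_Ioo]
    have e2 : ∫ z in Ioo a b, (z - a) * |g z| = ∫ z in a..b, (z - a) * |g z| := by
      rw [intervalIntegral.integral_of_le hab.le, integral_Ioc_eq_integral_Ioo]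
    rw [e1, e2]
    have e3 : ∫ z in a..b, v z = ∫ z in a..b, v z * 1 := by simp
    rw [e3, ibp, hvb]
    have e4 : ∫ z in a..b, (-|g z|) * (z - a) = - ∫ z in a..b, (z - a) * |g z| := by
      rw [← intervalIntegral.integral_neg]
      congr 1; ext z; ring
    rw [e4]; ring
  linarith [step1, step2.le]

lemma weight_sq_left {a b : ℝ} (hab : a < b) :
    ∫ z in Ioo a b, (b - z) ^ 2 = (b - a) ^ 3 / 3 := by
  have h : ∀ z ∈ uIcc a b, HasDerivAt (fun z => -(b - z) ^ 3 / 3) ((b - z) ^ 2) z := by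
    intro z _
    have : HasDerivAt (fun z : ℝ => -(b - z) ^ 3 / 3) (-(3 * (b - z) ^ (3-1) * (0 - 1)) / 3) z := by
      exact ((((hasDerivAt_const z b).sub (hasDerivAt_id z)).pow 3).neg).div_const 3
    convert this using 1; norm_num
  have := intervalIntegral.integral_eq_sub_of_hasDerivAt h
    ((by continuity : Continuous fun z : ℝ => (b - z) ^ 2).intervalIntegrable a b)
  rw [intervalIntegral.integral_of_le hab.le, integral_Ioc_eq_integral_Ioo] at this
  rw [this]; ring

lemma weight_sq_right {a b : ℝ} (hab : a < b) :
    ∫ z in Ioo a b, (z - a) ^ 2 = (b - a) ^ 3 / 3 := by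
  have h : ∀ z ∈ uIcc a b, HasDerivAt (fun z => (z - a) ^ 3 / 3) ((z - a) ^ 2) z := by
    intro z _
    have : HasDerivAt (fun z : ℝ => (z - a) ^ 3 / 3) ((3 * (z - a) ^ (3-1) * (1 - 0)) / 3) z := by
      exact ((((hasDerivAt_id z).sub (hasDerivAt_const z a)).pow 3)).div_const 3
    convert this using 1; norm_num
  have := intervalIntegral.integral_eq_sub_of_hasDerivAt h
    ((by continuity : Continuous fun z : ℝ => (z - a) ^ 2).intervalIntegrable a b)
  rw [intervalIntegral.integral_of_le hab.le, integral_Ioc_eq_integral_Ioo] at this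
  rw [this]; ring

/-- Young step: `c ∫ w |g| ≤ (d/4) ∫ g² + c² (b-a)³/(3d)` for weight `w`
with `∫ w² = (b-a)³/3`. -/
lemma young_step {a b c d : ℝ} (hab : a < b) (hd : 0 < d) {w g : ℝ → ℝ}
    (hw : Continuous w) (hg : Continuous g)
    (hwsq : ∫ z in Ioo a b, (w z) ^ 2 = (b - a) ^ 3 / 3) :
    c * ∫ z in Ioo a b, w z * |g z| ≤
      d / 4 * (∫ z in Ioo a b, (g z) ^ 2) + c ^ 2 * (b - a) ^ 3 / (3 * d) := by
  have hint1 : IntegrableOn (fun z => c * (w z * |g z|)) (Ioo a b) :=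
    ((continuous_const.mul (hw.mul hg.abs)).continuousOn.integrableOn_compact
      isCompact_Icc).mono_set Ioo_subset_Icc_self
  have hintg : IntegrableOn (fun z => d / 4 * (g z) ^ 2) (Ioo a b) :=
    ((continuous_const.mul (hg.pow 2)).continuousOn.integrableOn_compact
      isCompact_Icc).mono_set Ioo_subset_Icc_self
  have hintw : IntegrableOn (fun z => c ^ 2 / d * (w z) ^ 2) (Ioo a b) :=
    ((continuous_const.mul (hw.pow 2)).continuousOn.integrableOn_compact
      isCompact_Icc).mono_set Ioo_subset_Icc_self
  have hmono : ∫ z in Ioo a b, c * (w z * |g z|) ≤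
      ∫ z in Ioo a b, (d / 4 * (g z) ^ 2 + c ^ 2 / d * (w z) ^ 2) := by
    refine setIntegral_mono_on hint1 (hintg.add hintw) measurableSet_Ioo ?_
    intro z _
    have h2 : (g z) ^ 2 = |g z| ^ 2 := (sq_abs _).symm
    rw [h2]
    have key : 0 ≤ d / 4 * |g z| ^ 2 + c ^ 2 / d * (w z) ^ 2 - c * (w z * |g z|) := by
      have h3 : 0 ≤ (d * |g z| - 2 * (c * w z)) ^ 2 := sq_nonneg _
      have h4 : 0 ≤ (d * |g z| - 2 * (c * w z)) ^ 2 / (4 * d) := by positivity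
      have h5 : (d * |g z| - 2 * (c * w z)) ^ 2 / (4 * d)
          = d / 4 * |g z| ^ 2 + c ^ 2 / d * (w z) ^ 2 - c * (w z * |g z|) := by
        field_simp; ring_nf
      linarith [h5 ▸ h4]
    linarith
  have e1 : c * ∫ z in Ioo a b, w z * |g z| = ∫ z in Ioo a b, c * (w z * |g z|) :=
    (integral_const_mul c _).symm
  have e2 : ∫ z in Ioo a b, (d / 4 * (g z) ^ 2 + c ^ 2 / d * (w z) ^ 2)
      = d / 4 * (∫ z in Ioo a b, (g z) ^ 2) + c ^ 2 / d * ((b - a) ^ 3 / 3) := by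
    rw [integral_add hintg hintw, integral_const_mul, integral_const_mul, hwsq]
  have e3 : c ^ 2 / d * ((b - a) ^ 3 / 3) = c ^ 2 * (b - a) ^ 3 / (3 * d) := by
    rw [div_mul_div_comm, mul_comm d 3]
  rw [e1]
  calc ∫ z in Ioo a b, c * (w z * |g z|)
      ≤ d / 4 * (∫ z in Ioo a b, (g z) ^ 2) + c ^ 2 / d * ((b - a) ^ 3 / 3) := by
        rw [← e2]; exact hmono
    _ = d / 4 * (∫ z in Ioo a b, (g z) ^ 2) + c ^ 2 * (b - a) ^ 3 / (3 * d) := by rw [e3]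


/-- Estimate of the source term coming from the background profile: if
`φ_b''` is supported in the two boundary strips of width `δ` with
`|φ_b''| ≤ 2c_Δ/δ²`, `d₋ ≤ D ≤ d₊`, and `ψ` vanishes on the top and bottom
boundaries of `Ω = (0,L) × (-H,0)`, then
`|∫_Ω D φ_b'' ψ| ≤ (1/4) d₋ ‖∇ψ‖²_{L²(Ω)} + 4 c_Δ² L d₊²/(δ d₋)`. -/
theorem stmt12 (L H δ cΔ dmin dmax : ℝ)
    (hL : 0 < L) (hH : 0 < H) (hδ : 0 < δ) (hδH : 2 * δ < H)
    (hc : 0 < cΔ) (hd : 0 < dmin) (hdd : dmin ≤ dmax)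
    (D : ℝ × ℝ → ℝ) (hDmeas : Measurable D)
    (hD : ∀ x, dmin ≤ D x ∧ D x ≤ dmax)
    (f : ℝ → ℝ) (hfmeas : Measurable f)
    (hsupp : ∀ z, z ∉ Ioo (-H) (-H + δ) ∪ Ioo (-δ) 0 → f z = 0)
    (hfb : ∀ z, |f z| ≤ 2 * cΔ / δ ^ 2)
    (ψ : ℝ × ℝ → ℝ) (hψ : ContDiff ℝ 1 ψ)
    (hψ0 : ∀ x, ψ (x, 0) = 0) (hψH : ∀ x, ψ (x, -H) = 0) :
    |∫ x in Ioo 0 L ×ˢ Ioo (-H) 0, D x * f x.2 * ψ x| ≤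
      1 / 4 * dmin *
          (∫ x in Ioo 0 L ×ˢ Ioo (-H) 0,
            ((fderiv ℝ ψ x (1, 0)) ^ 2 + (fderiv ℝ ψ x (0, 1)) ^ 2)) +
        4 * cΔ ^ 2 * L * dmax ^ 2 / (δ * dmin) := by
  have hdmax : 0 < dmax := lt_of_lt_of_le hd hdd
  have hprod : (volume : Measure (ℝ × ℝ)) = (volume : Measure ℝ).prod volume :=
    Measure.volume_eq_prod ℝ ℝ
  set Ω : Set (ℝ × ℝ) := Ioo 0 L ×ˢ Ioo (-H) 0 with hΩ
  set Kc : Set (ℝ × ℝ) := Icc 0 L ×ˢ Icc (-H) 0 with hKc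
  have hKcpt : IsCompact Kc := isCompact_Icc.prod isCompact_Icc
  have hΩK : Ω ⊆ Kc := prod_mono Ioo_subset_Icc_self Ioo_subset_Icc_self
  have hΩmeas : MeasurableSet Ω := measurableSet_Ioo.prod measurableSet_Ioo
  set F : ℝ × ℝ → ℝ := fun p => D p * f p.2 * ψ p with hF
  set G : ℝ × ℝ → ℝ := fun p => (fderiv ℝ ψ p (1, 0)) ^ 2 + (fderiv ℝ ψ p (0, 1)) ^ 2 with hG
  set c : ℝ := dmax * (2 * cΔ / δ ^ 2) with hc0
  have hcpos : 0 < c := by rw [hc0]; positivity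
  -- continuity
  have hψc : Continuous ψ := hψ.continuous
  have hfd : Continuous (fderiv ℝ ψ) := hψ.continuous_fderiv one_ne_zero
  have hg1c : Continuous fun p => fderiv ℝ ψ p ((1 : ℝ), (0 : ℝ)) := hfd.clm_apply continuous_const
  have hg2c : Continuous fun p => fderiv ℝ ψ p ((0 : ℝ), (1 : ℝ)) := hfd.clm_apply continuous_const
  have hGc : Continuous G := (hg1c.pow 2).add (hg2c.pow 2)
  -- measurability, integrability
  have hFmeas : Measurable F := (hDmeas.mul (hfmeas.comp measurable_snd)).mul hψc.measurable
  obtain ⟨M, hM⟩ := hKcpt.exists_bound_of_continuousOn hψc.continuousOn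
  have hvolΩ : volume Ω ≠ ⊤ := ((measure_mono hΩK).trans_lt hKcpt.measure_lt_top).ne
  have habs_le : ∀ p : ℝ × ℝ, ∀ Mb : ℝ, |ψ p| ≤ Mb → |F p| ≤ c * Mb := by
    intro p Mb hMb
    have h1 : |D p| ≤ dmax := abs_le.mpr ⟨by linarith [(hD p).1], (hD p).2⟩
    have h2 : |f p.2| ≤ 2 * cΔ / δ ^ 2 := hfb p.2
    have e : |F p| = |D p| * |f p.2| * |ψ p| := by rw [hF]; rw [abs_mul, abs_mul]
    rw [e, hc0]
    exact mul_le_mul (mul_le_mul h1 h2 (abs_nonneg _) hdmax.le) hMb (abs_nonneg _)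
      (by positivity)
  have hFint : IntegrableOn F Ω := by
    refine Measure.integrableOn_of_bounded hvolΩ hFmeas.aestronglyMeasurable
      (M := c * M) ?_
    refine (ae_restrict_iff' hΩmeas).mpr (Filter.Eventually.of_forall fun p hp => ?_)
    rw [Real.norm_eq_abs]
    exact habs_le p M (by rw [← Real.norm_eq_abs]; exact hM p (hΩK hp))
  have habsint : IntegrableOn (fun p => |F p|) Ω := hFint.abs
  have hGint : IntegrableOn G Ω := (hGc.continuousOn.integrableOn_compact hKcpt).mono_set hΩK
  -- strip data
  have hb1 : -H < -H + δ := by linarith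
  have hmid : -H + δ ≤ -δ := by linarith
  have ht1 : -δ < (0 : ℝ) := by linarith
  have hs1 : Ioo (-H) (-H + δ) ⊆ Ioo (-H) 0 := Ioo_subset_Ioo le_rfl (by linarith)
  have hs2 : Ioo (-δ) (0 : ℝ) ⊆ Ioo (-H) 0 := Ioo_subset_Ioo (by linarith) le_rfl
  have hdisj : Disjoint (Ioo (-H) (-H + δ)) (Ioo (-δ) (0 : ℝ)) := by
    rw [Set.disjoint_left]
    intro z hz1 hz2
    exact absurd (hz1.2.trans_le hmid) (not_lt.mpr hz2.1.le)
  -- per-column estimate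
  have key : ∀ x : ℝ, (∫ z in Ioo (-H) 0, |F (x, z)|) ≤
      dmin / 4 * (∫ z in Ioo (-H) 0, G (x, z)) + 2 * (c ^ 2 * δ ^ 3 / (3 * dmin)) := by
    intro x
    set u : ℝ → ℝ := fun z => ψ (x, z) with hu_def
    set g : ℝ → ℝ := fun z => fderiv ℝ ψ (x, z) ((0 : ℝ), (1 : ℝ)) with hg_def
    have hgc : Continuous g := hg2c.comp (Continuous.prodMk_right x)
    have hu : ∀ z, HasDerivAt u (g z) z := by
      intro z
      have h1 : HasFDerivAt ψ (fderiv ℝ ψ (x, z)) (x, z) :=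
        (hψ.differentiable one_ne_zero (x, z)).hasFDerivAt
      have h2 : HasDerivAt (fun z : ℝ => ((x, z) : ℝ × ℝ)) ((0 : ℝ), (1 : ℝ)) z :=
        (hasDerivAt_const z x).prodMk (hasDerivAt_id z)
      exact h1.comp_hasDerivAt z h2
    have hucont : Continuous u := hψc.comp (Continuous.prodMk_right x)
    have hFxmeas : Measurable fun z => F (x, z) :=
      hFmeas.comp (measurable_const.prodMk measurable_id)
    obtain ⟨Mx, hMx⟩ :=
      (isCompact_Icc (a := -H) (b := (0 : ℝ))).exists_bound_of_continuousOn hucont.continuousOn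
    have hFxint : IntegrableOn (fun z => |F (x, z)|) (Ioo (-H) 0) := by
      refine Measure.integrableOn_of_bounded (by simp [Real.volume_Ioo]) 
        hFxmeas.abs.aestronglyMeasurable (M := c * Mx) ?_
      refine (ae_restrict_iff' measurableSet_Ioo).mpr (Filter.Eventually.of_forall fun z hz => ?_)
      rw [Real.norm_eq_abs, abs_abs]
      refine habs_le (x, z) Mx ?_
      rw [← Real.norm_eq_abs]
      exact hMx z (Ioo_subset_Icc_self hz)
    have hGxint : IntegrableOn (fun z => G (x, z)) (Ioo (-H) 0) :=
      ((hGc.comp (Continuous.prodMk_right x)).continuousOn.integrableOn_compact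
        isCompact_Icc).mono_set Ioo_subset_Icc_self
    have hgsqint : IntegrableOn (fun z => (g z) ^ 2) (Ioo (-H) 0) :=
      ((hgc.pow 2).continuousOn.integrableOn_compact isCompact_Icc).mono_set Ioo_subset_Icc_self
    -- support splitting
    have eA : ∫ z in Ioo (-H) 0, |F (x, z)| =
        (∫ z in Ioo (-H) (-H + δ), |F (x, z)|) + ∫ z in Ioo (-δ) 0, |F (x, z)| := by
      have hcongr : ∀ z ∈ Ioo (-H) (0 : ℝ), |F (x, z)| =
          (Ioo (-H) (-H + δ) ∪ Ioo (-δ) 0).indicator (fun z => |F (x, z)|) z := by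
        intro z _
        by_cases h : z ∈ Ioo (-H) (-H + δ) ∪ Ioo (-δ) (0 : ℝ)
        · rw [indicator_of_mem h]
        · rw [indicator_of_notMem h, hF]
          simp [hsupp z h]
      rw [setIntegral_congr_fun measurableSet_Ioo hcongr,
        setIntegral_indicator (measurableSet_Ioo.union measurableSet_Ioo),
        inter_eq_self_of_subset_right (union_subset hs1 hs2),
        setIntegral_union hdisj measurableSet_Ioo (hFxint.mono_set hs1) (hFxint.mono_set hs2)]
    -- pointwise bound on strips
    have hFle : ∀ z : ℝ, |F (x, z)| ≤ c * |u z| := fun z => habs_le (x, z) |u z| le_rfl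
    have hcuint : IntegrableOn (fun z => c * |u z|) (Ioo (-H) 0) :=
      ((continuous_const.mul hucont.abs).continuousOn.integrableOn_compact
        isCompact_Icc).mono_set Ioo_subset_Icc_self
    have hB1 : ∫ z in Ioo (-H) (-H + δ), |F (x, z)| ≤ c * ∫ z in Ioo (-H) (-H + δ), |u z| := by
      rw [← integral_const_mul]
      exact setIntegral_mono_on (hFxint.mono_set hs1) (hcuint.mono_set hs1)
        measurableSet_Ioo (fun z _ => hFle z)
    have hB2 : ∫ z in Ioo (-δ) 0, |F (x, z)| ≤ c * ∫ z in Ioo (-δ) 0, |u z| := by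
      rw [← integral_const_mul]
      exact setIntegral_mono_on (hFxint.mono_set hs2) (hcuint.mono_set hs2)
        measurableSet_Ioo (fun z _ => hFle z)
    -- FTC bounds
    have hA1 : ∫ z in Ioo (-H) (-H + δ), |u z| ≤
        ∫ z in Ioo (-H) (-H + δ), ((-H + δ) - z) * |g z| :=
      aux_left hb1 hgc hu (hψH x)
    have hA2 : ∫ z in Ioo (-δ) 0, |u z| ≤ ∫ z in Ioo (-δ) 0, (z - (-δ)) * |g z| :=
      aux_right ht1 hgc hu (hψ0 x)
    have hA1' : c * ∫ z in Ioo (-H) (-H + δ), |u z| ≤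
        c * ∫ z in Ioo (-H) (-H + δ), ((-H + δ) - z) * |g z| :=
      mul_le_mul_of_nonneg_left hA1 hcpos.le
    have hA2' : c * ∫ z in Ioo (-δ) 0, |u z| ≤
        c * ∫ z in Ioo (-δ) 0, (z - (-δ)) * |g z| :=
      mul_le_mul_of_nonneg_left hA2 hcpos.le
    -- Young steps
    have hY1 : c * ∫ z in Ioo (-H) (-H + δ), ((-H + δ) - z) * |g z| ≤
        dmin / 4 * (∫ z in Ioo (-H) (-H + δ), (g z) ^ 2) +
          c ^ 2 * ((-H + δ) - (-H)) ^ 3 / (3 * dmin) :=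
      young_step hb1 hd (continuous_const.sub continuous_id) hgc (weight_sq_left hb1)
    have hY2 : c * ∫ z in Ioo (-δ) 0, (z - (-δ)) * |g z| ≤
        dmin / 4 * (∫ z in Ioo (-δ) 0, (g z) ^ 2) +
          c ^ 2 * ((0 : ℝ) - (-δ)) ^ 3 / (3 * dmin) :=
      young_step ht1 hd (continuous_id.sub continuous_const) hgc (weight_sq_right ht1)
    have hδ1 : (-H + δ) - (-H) = δ := by ring
    have hδ2 : (0 : ℝ) - (-δ) = δ := by ring
    rw [hδ1] at hY1
    rw [hδ2] at hY2
    -- sum of strip dissipation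
    have hsum : (∫ z in Ioo (-H) (-H + δ), (g z) ^ 2) + (∫ z in Ioo (-δ) 0, (g z) ^ 2) ≤
        ∫ z in Ioo (-H) 0, (g z) ^ 2 := by
      rw [← setIntegral_union hdisj measurableSet_Ioo (hgsqint.mono_set hs1)
        (hgsqint.mono_set hs2)]
      exact setIntegral_mono_set hgsqint (Filter.Eventually.of_forall fun z => sq_nonneg _)
        ((union_subset hs1 hs2).eventuallyLE)
    have hg2G : ∫ z in Ioo (-H) 0, (g z) ^ 2 ≤ ∫ z in Ioo (-H) 0, G (x, z) := by
      refine setIntegral_mono_on hgsqint hGxint measurableSet_Ioo fun z _ => ?_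
      have hGval : G (x, z) =
          (fderiv ℝ ψ (x, z)) (1, 0) ^ 2 + (fderiv ℝ ψ (x, z)) (0, 1) ^ 2 := rfl
      have hgz : g z = (fderiv ℝ ψ (x, z)) (0, 1) := rfl
      rw [hGval, hgz]
      nlinarith [sq_nonneg ((fderiv ℝ ψ (x, z)) (1, 0))]
    have hd4 : (0 : ℝ) ≤ dmin / 4 := by linarith
    have hfin := mul_le_mul_of_nonneg_left (hsum.trans hg2G) hd4
    linarith [eA, hB1, hB2, hA1', hA2', hY1, hY2, hfin]
  -- outer (Fubini) part
  have hstep1 : |∫ p in Ω, F p| ≤ ∫ p in Ω, |F p| := by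
    calc |∫ p in Ω, F p| = ‖∫ p in Ω, F p‖ := (Real.norm_eq_abs _).symm
      _ ≤ ∫ p in Ω, ‖F p‖ := norm_integral_le_integral_norm _
      _ = ∫ p in Ω, |F p| := by simp [Real.norm_eq_abs]
  have hFprod : IntegrableOn (fun p : ℝ × ℝ => |F p|) Ω ((volume : Measure ℝ).prod volume) := by
    rw [← hprod]; exact habsint
  have hGprod : IntegrableOn G Ω ((volume : Measure ℝ).prod volume) := by
    rw [← hprod]; exact hGint
  have eF : ∫ p in Ω, |F p| = ∫ x in Ioo 0 L, ∫ z in Ioo (-H) 0, |F (x, z)| := by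
    calc ∫ p in Ω, |F p| = ∫ p in Ω, |F p| ∂((volume : Measure ℝ).prod volume) := by
          rw [← hprod]
      _ = ∫ x in Ioo 0 L, ∫ z in Ioo (-H) 0, |F (x, z)| := setIntegral_prod _ hFprod
  have eG : ∫ p in Ω, G p = ∫ x in Ioo 0 L, ∫ z in Ioo (-H) 0, G (x, z) := by
    calc ∫ p in Ω, G p = ∫ p in Ω, G p ∂((volume : Measure ℝ).prod volume) := by
          rw [← hprod]
      _ = ∫ x in Ioo 0 L, ∫ z in Ioo (-H) 0, G (x, z) := setIntegral_prod _ hGprod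
  have hIx1 : IntegrableOn (fun x => ∫ z in Ioo (-H) 0, |F (x, z)|) (Ioo 0 L) := by
    have h : Integrable (fun p : ℝ × ℝ => |F p|)
        ((volume.restrict (Ioo 0 L)).prod (volume.restrict (Ioo (-H) 0))) := by
      rw [Measure.prod_restrict]; exact hFprod
    exact h.integral_prod_left
  have hIx2 : IntegrableOn (fun x => ∫ z in Ioo (-H) 0, G (x, z)) (Ioo 0 L) := by
    have h : Integrable G
        ((volume.restrict (Ioo 0 L)).prod (volume.restrict (Ioo (-H) 0))) := by
      rw [Measure.prod_restrict]; exact hGprod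
    exact h.integral_prod_left
  have hconstint : IntegrableOn (fun _ : ℝ => 2 * (c ^ 2 * δ ^ 3 / (3 * dmin))) (Ioo 0 L) :=
    integrableOn_const (by simp [Real.volume_Ioo])
  have houter : ∫ x in Ioo 0 L, (∫ z in Ioo (-H) 0, |F (x, z)|) ≤
      ∫ x in Ioo 0 L,
        (dmin / 4 * (∫ z in Ioo (-H) 0, G (x, z)) + 2 * (c ^ 2 * δ ^ 3 / (3 * dmin))) := by
    refine setIntegral_mono_on hIx1 ?_ measurableSet_Ioo (fun x _ => key x)
    exact (hIx2.const_mul _).add hconstint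
  have eRHS : ∫ x in Ioo 0 L,
      (dmin / 4 * (∫ z in Ioo (-H) 0, G (x, z)) + 2 * (c ^ 2 * δ ^ 3 / (3 * dmin)))
      = dmin / 4 * (∫ x in Ioo 0 L, ∫ z in Ioo (-H) 0, G (x, z)) +
        L * (2 * (c ^ 2 * δ ^ 3 / (3 * dmin))) := by
    rw [integral_add (hIx2.const_mul _) hconstint, integral_const_mul, setIntegral_const]
    simp [Real.volume_Ioo, ENNReal.toReal_ofReal hL.le, hL.le]
  have hI0 : 0 ≤ ∫ p in Ω, G p :=
    setIntegral_nonneg hΩmeas fun p _ => by rw [hG]; positivity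
  have hδ0 : δ ≠ 0 := hδ.ne'
  have hd0 : dmin ≠ 0 := hd.ne'
  have hconst : L * (2 * (c ^ 2 * δ ^ 3 / (3 * dmin))) ≤
      4 * cΔ ^ 2 * L * dmax ^ 2 / (δ * dmin) := by
    have hE : L * (2 * (c ^ 2 * δ ^ 3 / (3 * dmin))) =
        8 / 3 * (cΔ ^ 2 * L * dmax ^ 2 / (δ * dmin)) := by
      rw [hc0]; field_simp; ring
    have hE2 : 4 * cΔ ^ 2 * L * dmax ^ 2 / (δ * dmin) =
        4 * (cΔ ^ 2 * L * dmax ^ 2 / (δ * dmin)) := by ring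
    have hX : 0 ≤ cΔ ^ 2 * L * dmax ^ 2 / (δ * dmin) := by positivity
    rw [hE, hE2]
    linarith
  have hfinal : |∫ p in Ω, F p| ≤
      1 / 4 * dmin * (∫ p in Ω, G p) + 4 * cΔ ^ 2 * L * dmax ^ 2 / (δ * dmin) := by
    have h14 : dmin / 4 = 1 / 4 * dmin := by ring
    calc |∫ p in Ω, F p| ≤ ∫ p in Ω, |F p| := hstep1
      _ = ∫ x in Ioo 0 L, ∫ z in Ioo (-H) 0, |F (x, z)| := eF
      _ ≤ dmin / 4 * (∫ x in Ioo 0 L, ∫ z in Ioo (-H) 0, G (x, z)) +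
          L * (2 * (c ^ 2 * δ ^ 3 / (3 * dmin))) := by rw [← eRHS]; exact houter
      _ = dmin / 4 * (∫ p in Ω, G p) + L * (2 * (c ^ 2 * δ ^ 3 / (3 * dmin))) := by rw [eG]
      _ ≤ 1 / 4 * dmin * (∫ p in Ω, G p) + 4 * cΔ ^ 2 * L * dmax ^ 2 / (δ * dmin) := by
          rw [h14]; linarith
  exact hfinal
end

section
/- Let Ω = (0,L)×(-H,0), let φ_b' be supported in the boundary strips Ω_δ of width δ with |φ_b'| ≤ c_Δ/δ, and let u = (u_x, u_z) be a divergence-free vector field on Ω with u_z = 0 at z = 0, -H, and ψ ∈ H¹(Ω) vanishing at z = 0 and z = -H. Then |∫_Ω φ_b' u_z ψ dx| ≤ c_Δ δ ‖∂_x u_x‖_{L²(Ω)} ‖∂_z ψ‖_{L²(Ω)}. -/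
open Set MeasureTheory


lemma my_cs {α : Type*} [MeasurableSpace α] (μ : Measure α) (f g : α → ℝ)
    (hf : MemLp f 2 μ) (hg : MemLp g 2 μ) :
    ∫ a, |f a * g a| ∂μ ≤ Real.sqrt (∫ a, f a ^ 2 ∂μ) * Real.sqrt (∫ a, g a ^ 2 ∂μ) := by
  have hpq : Real.HolderConjugate 2 2 := Real.HolderConjugate.two_two
  have h2 : (ENNReal.ofReal (2:ℝ)) = 2 := by norm_num
  have := integral_mul_norm_le_Lp_mul_Lq (μ := μ) hpq (by rw [h2]; exact hf) (by rw [h2]; exact hg)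
  have e1 : ∀ h : α → ℝ, ∫ a, ‖h a‖ ^ (2:ℝ) ∂μ = ∫ a, h a ^ 2 ∂μ := by
    intro h
    apply integral_congr_ae
    filter_upwards with a
    rw [Real.norm_eq_abs, show ((2:ℝ)) = ((2:ℕ):ℝ) by norm_num, Real.rpow_natCast, sq_abs]
  rw [e1, e1] at this
  calc ∫ a, |f a * g a| ∂μ = ∫ a, ‖f a‖ * ‖g a‖ ∂μ := by
        congr 1; funext a; rw [Real.norm_eq_abs, Real.norm_eq_abs, abs_mul]
    _ ≤ (∫ a, f a ^ 2 ∂μ) ^ (1/(2:ℝ)) * (∫ a, g a ^ 2 ∂μ) ^ (1/(2:ℝ)) := this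
    _ = _ := by rw [← Real.sqrt_eq_rpow, ← Real.sqrt_eq_rpow]

lemma my_poincare_left (a b : ℝ) (hab : a ≤ b) (f d : ℝ → ℝ)
    (hf : ∀ z, HasDerivAt f (d z) z) (hd : Continuous d) (hfa : f a = 0) :
    ∫ z in Ioo a b, f z ^ 2 ≤ (b - a) ^ 2 * ∫ z in Ioo a b, d z ^ 2 := by
  have hfc : Continuous f :=
    (Differentiable.continuous fun z => (hf z).differentiableAt)
  have hdsq : Continuous (fun t => d t ^ 2) := hd.pow 2
  have hIdb : IntegrableOn (fun t => d t ^ 2) (Ioc a b) :=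
    (hdsq.continuousOn.integrableOn_compact isCompact_Icc).mono_set Ioc_subset_Icc_self
  set C : ℝ := ∫ t in Ioo a b, d t ^ 2 with hC
  have hCnn : 0 ≤ C := setIntegral_nonneg measurableSet_Ioo (fun t _ => sq_nonneg _)
  have key : ∀ z ∈ Icc a b, f z ^ 2 ≤ (b - a) * C := by
    intro z hz
    obtain ⟨haz, hzb⟩ := hz
    have ftc : ∫ t in a..z, d t = f z - f a :=
      intervalIntegral.integral_eq_sub_of_hasDerivAt (fun t _ => hf t)
        (hd.intervalIntegrable a z)
    have hfz : f z = ∫ t in Ioc a z, d t := by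
      rw [← intervalIntegral.integral_of_le haz, ftc, hfa, sub_zero]
    haveI : IsFiniteMeasure (volume.restrict (Ioc a z)) :=
      ⟨by rw [Measure.restrict_apply_univ]; exact measure_Ioc_lt_top⟩
    have hmemd : MemLp d 2 (volume.restrict (Ioc a z)) :=
      (memLp_two_iff_integrable_sq hd.aestronglyMeasurable.restrict).mpr
        ((hdsq.continuousOn.integrableOn_compact isCompact_Icc).mono_set Ioc_subset_Icc_self)
    have hmem1 : MemLp (fun _ : ℝ => (1:ℝ)) 2 (volume.restrict (Ioc a z)) :=
      memLp_const 1
    have hcs := my_cs (volume.restrict (Ioc a z)) d (fun _ => 1) hmemd hmem1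
    have h1 : ∫ t in Ioc a z, (1:ℝ) ^ 2 = z - a := by
      simp [Real.volume_Ioc, ENNReal.toReal_ofReal (sub_nonneg.mpr haz), haz]
    have habs : |f z| ≤ Real.sqrt (∫ t in Ioc a z, d t ^ 2) * Real.sqrt (z - a) := by
      rw [hfz]
      calc |∫ t in Ioc a z, d t| ≤ ∫ t in Ioc a z, |d t * 1| := by
            simpa using norm_integral_le_integral_norm (μ := volume.restrict (Ioc a z)) d
        _ ≤ Real.sqrt (∫ t in Ioc a z, d t ^ 2) * Real.sqrt (∫ t in Ioc a z, (1:ℝ) ^ 2) := hcs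
        _ = _ := by rw [h1]
    have hdz : ∫ t in Ioc a z, d t ^ 2 ≤ C := by
      rw [hC, ← integral_Ioc_eq_integral_Ioo]
      exact setIntegral_mono_set hIdb (Filter.Eventually.of_forall fun t => sq_nonneg _)
        (HasSubset.Subset.eventuallyLE (Ioc_subset_Ioc_right hzb))
    have hInn : 0 ≤ ∫ t in Ioc a z, d t ^ 2 :=
      setIntegral_nonneg measurableSet_Ioc (fun t _ => sq_nonneg _)
    have hsq : f z ^ 2 ≤ (∫ t in Ioc a z, d t ^ 2) * (z - a) := by
      have h2 := pow_le_pow_left₀ (abs_nonneg (f z)) habs 2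
      rw [sq_abs, mul_pow, Real.sq_sqrt hInn, Real.sq_sqrt (sub_nonneg.mpr haz)] at h2
      exact h2
    calc f z ^ 2 ≤ (∫ t in Ioc a z, d t ^ 2) * (z - a) := hsq
      _ ≤ C * (b - a) := mul_le_mul hdz (by linarith) (by linarith)
          (hCnn)
      _ = (b - a) * C := mul_comm _ _
  have hIf : IntegrableOn (fun z => f z ^ 2) (Ioo a b) :=
    ((hfc.pow 2).continuousOn.integrableOn_compact isCompact_Icc).mono_set Ioo_subset_Icc_self
  calc ∫ z in Ioo a b, f z ^ 2 ≤ ∫ _z in Ioo a b, (b - a) * C :=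
        setIntegral_mono_on hIf ((integrableOn_const_iff).mpr (Or.inr measure_Ioo_lt_top))
          measurableSet_Ioo (fun z hz => key z (Ioo_subset_Icc_self hz))
    _ = (b - a) * ((b - a) * C) := by
        rw [setIntegral_const, Real.volume_real_Ioo_of_le hab, smul_eq_mul]
    _ = (b - a) ^ 2 * C := by ring

lemma my_poincare_right (a b : ℝ) (hab : a ≤ b) (f d : ℝ → ℝ)
    (hf : ∀ z, HasDerivAt f (d z) z) (hd : Continuous d) (hfb : f b = 0) :
    ∫ z in Ioo a b, f z ^ 2 ≤ (b - a) ^ 2 * ∫ z in Ioo a b, d z ^ 2 := by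
  set F : ℝ → ℝ := fun t => f (a + b - t) with hF
  set D : ℝ → ℝ := fun t => -d (a + b - t) with hD
  have hFa : F a = 0 := by simp [hF, hfb]
  have hFd : ∀ z, HasDerivAt F (D z) z := by
    intro z
    have hinner : HasDerivAt (fun t : ℝ => a + b - t) (-1) z :=
      (hasDerivAt_id z).const_sub (a + b)
    have h3 := (hf (a + b - z)).comp z hinner
    rw [show D z = d (a + b - z) * -1 by simp [hD]]; exact h3
  have hDc : Continuous D := (hd.comp (by continuity)).neg
  have hP := my_poincare_left a b hab F D hFd hDc hFa
  have e0 : ∀ g : ℝ → ℝ, ∫ z in Ioo a b, g (a + b - z) = ∫ z in Ioo a b, g z := by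
    intro g
    rw [← integral_Ioc_eq_integral_Ioo, ← integral_Ioc_eq_integral_Ioo,
      ← intervalIntegral.integral_of_le hab, ← intervalIntegral.integral_of_le hab]
    have := intervalIntegral.integral_comp_sub_left (a := a) (b := b) g (a + b)
    simpa using this
  have e1 : ∫ z in Ioo a b, F z ^ 2 = ∫ z in Ioo a b, f z ^ 2 := e0 (fun t => f t ^ 2)
  have e2 : ∫ z in Ioo a b, D z ^ 2 = ∫ z in Ioo a b, d z ^ 2 := by
    have : ∀ z, D z ^ 2 = (fun t => d t ^ 2) (a + b - z) := by intro z; simp [hD]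
    rw [show (fun z => D z ^ 2) = fun z => (fun t => d t ^ 2) (a + b - z) from funext this]
    exact e0 (fun t => d t ^ 2)
  rw [← e1, ← e2]
  exact hP



lemma slice_deriv_snd (u : ℝ × ℝ → ℝ × ℝ) (hu : ContDiff ℝ 1 u) (x z : ℝ) :
    HasDerivAt (fun t => (u (x, t)).2) ((fderiv ℝ u (x, z) (0, 1)).2) z := by
  have h1 : HasDerivAt (fun t : ℝ => ((x : ℝ), t)) ((0 : ℝ), (1 : ℝ)) z :=
    (hasDerivAt_const z x).prodMk (hasDerivAt_id z)
  have h2 : HasFDerivAt u (fderiv ℝ u (x, z)) (x, z) :=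
    (hu.differentiable one_ne_zero (x, z)).hasFDerivAt
  have h3 := h2.comp_hasDerivAt z h1
  exact (ContinuousLinearMap.snd ℝ ℝ ℝ).hasFDerivAt.comp_hasDerivAt z h3

lemma slice_deriv_scalar (ψ : ℝ × ℝ → ℝ) (hψ : ContDiff ℝ 1 ψ) (x z : ℝ) :
    HasDerivAt (fun t => ψ (x, t)) (fderiv ℝ ψ (x, z) (0, 1)) z := by
  have h1 : HasDerivAt (fun t : ℝ => ((x : ℝ), t)) ((0 : ℝ), (1 : ℝ)) z :=
    (hasDerivAt_const z x).prodMk (hasDerivAt_id z)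
  have h2 : HasFDerivAt ψ (fderiv ℝ ψ (x, z)) (x, z) :=
    (hψ.differentiable one_ne_zero (x, z)).hasFDerivAt
  exact h2.comp_hasDerivAt z h1

lemma cont_fderiv_apply_snd (u : ℝ × ℝ → ℝ × ℝ) (hu : ContDiff ℝ 1 u) :
    Continuous (fun p => (fderiv ℝ u p (0, 1)).2) := by
  have h := (hu.continuous_fderiv one_ne_zero)
  exact continuous_snd.comp (h.clm_apply continuous_const)

lemma cont_fderiv_apply_fst (u : ℝ × ℝ → ℝ × ℝ) (hu : ContDiff ℝ 1 u) :
    Continuous (fun p => (fderiv ℝ u p (1, 0)).1) := by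
  have h := (hu.continuous_fderiv one_ne_zero)
  exact continuous_fst.comp (h.clm_apply continuous_const)

lemma cont_fderiv_scalar (ψ : ℝ × ℝ → ℝ) (hψ : ContDiff ℝ 1 ψ) :
    Continuous (fun p => fderiv ℝ ψ p (0, 1)) := by
  have h := (hψ.continuous_fderiv one_ne_zero)
  exact h.clm_apply continuous_const

lemma strip_poincare (L H δ : ℝ) (hL : 0 < L) (hH : 0 < H) (hδ : 0 < δ)
    (hδH : 2 * δ < H) (v d : ℝ × ℝ → ℝ) (hv : Continuous v) (hd : Continuous d)
    (hderiv : ∀ x z, HasDerivAt (fun t => v (x, t)) (d (x, z)) z)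
    (hv0 : ∀ x, v (x, 0) = 0) (hvH : ∀ x, v (x, -H) = 0) :
    ∫ p in Ioo 0 L ×ˢ (Ioo (-H) (-H + δ) ∪ Ioo (-δ) 0), v p ^ 2 ≤
      δ ^ 2 * ∫ p in Ioo 0 L ×ˢ Ioo (-H) 0, d p ^ 2 := by
  set B : Set ℝ := Ioo (-H) (-H + δ) with hBdef
  set T : Set ℝ := Ioo (-δ) 0 with hTdef
  set S : Set ℝ := B ∪ T with hSdef
  have hBT : Disjoint B T := by
    rw [Set.disjoint_left]; rintro z ⟨_, h2⟩ ⟨h3, _⟩; linarith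
  have hSsub : S ⊆ Ioo (-H) 0 := by
    rintro z (⟨h1, h2⟩ | ⟨h1, h2⟩) <;> exact ⟨by linarith, by linarith⟩
  -- integrability
  have hcompact : IsCompact (Icc (0:ℝ) L ×ˢ Icc (-H) (0:ℝ)) :=
    isCompact_Icc.prod isCompact_Icc
  have hsubK : (Ioo 0 L ×ˢ Ioo (-H) 0 : Set (ℝ × ℝ)) ⊆ Icc 0 L ×ˢ Icc (-H) 0 :=
    Set.prod_mono Ioo_subset_Icc_self Ioo_subset_Icc_self
  have hsubKA : (Ioo 0 L ×ˢ S : Set (ℝ × ℝ)) ⊆ Icc 0 L ×ˢ Icc (-H) 0 :=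
    Set.prod_mono Ioo_subset_Icc_self (fun z hz => Ioo_subset_Icc_self (hSsub hz))
  have hIv : IntegrableOn (fun p => v p ^ 2) (Ioo 0 L ×ˢ S) :=
    (((hv.pow 2).continuousOn.integrableOn_compact hcompact).mono_set hsubKA)
  have hId : IntegrableOn (fun p => d p ^ 2) (Ioo 0 L ×ˢ Ioo (-H) 0) :=
    (((hd.pow 2).continuousOn.integrableOn_compact hcompact).mono_set hsubK)
  -- Fubini setup
  have hprodA : (volume : Measure (ℝ × ℝ)).restrict (Ioo 0 L ×ˢ S) =
      (volume.restrict (Ioo 0 L)).prod (volume.restrict S) := by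
    rw [Measure.prod_restrict, ← Measure.volume_eq_prod]
  have hprodΩ : (volume : Measure (ℝ × ℝ)).restrict (Ioo 0 L ×ˢ Ioo (-H) 0) =
      (volume.restrict (Ioo 0 L)).prod (volume.restrict (Ioo (-H) 0)) := by
    rw [Measure.prod_restrict, ← Measure.volume_eq_prod]
  have hIvp : Integrable (fun p => v p ^ 2)
      ((volume.restrict (Ioo 0 L)).prod (volume.restrict S)) := by
    rwa [← hprodA]
  have hIdp : Integrable (fun p => d p ^ 2)
      ((volume.restrict (Ioo 0 L)).prod (volume.restrict (Ioo (-H) 0))) := by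
    rwa [← hprodΩ]
  -- pointwise in x
  have key : ∀ x : ℝ, ∫ z in S, v (x, z) ^ 2 ≤ δ ^ 2 * ∫ z in Ioo (-H) 0, d (x, z) ^ 2 := by
    intro x
    have hvx : Continuous (fun z => v (x, z)) := hv.comp (continuous_const.prodMk continuous_id)
    have hdx : Continuous (fun z => d (x, z)) := hd.comp (continuous_const.prodMk continuous_id)
    have hIB : IntegrableOn (fun z => v (x, z) ^ 2) B :=
      ((hvx.pow 2).continuousOn.integrableOn_compact isCompact_Icc).mono_set
        Ioo_subset_Icc_self
    have hIT : IntegrableOn (fun z => v (x, z) ^ 2) T :=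
      ((hvx.pow 2).continuousOn.integrableOn_compact isCompact_Icc).mono_set
        Ioo_subset_Icc_self
    have hIdz : IntegrableOn (fun z => d (x, z) ^ 2) (Ioo (-H) 0) :=
      ((hdx.pow 2).continuousOn.integrableOn_compact isCompact_Icc).mono_set
        Ioo_subset_Icc_self
    have hsplit : ∫ z in S, v (x, z) ^ 2 = (∫ z in B, v (x, z) ^ 2) + ∫ z in T, v (x, z) ^ 2 :=
      setIntegral_union hBT measurableSet_Ioo hIB hIT
    have hbot : ∫ z in B, v (x, z) ^ 2 ≤ δ ^ 2 * ∫ z in B, d (x, z) ^ 2 := by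
      have := my_poincare_left (-H) (-H + δ) (by linarith) (fun z => v (x, z))
        (fun z => d (x, z)) (fun z => hderiv x z) hdx (hvH x)
      simpa using this
    have htop : ∫ z in T, v (x, z) ^ 2 ≤ δ ^ 2 * ∫ z in T, d (x, z) ^ 2 := by
      have := my_poincare_right (-δ) 0 (by linarith) (fun z => v (x, z))
        (fun z => d (x, z)) (fun z => hderiv x z) hdx (hv0 x)
      simpa using this
    have hsum : (∫ z in B, d (x, z) ^ 2) + ∫ z in T, d (x, z) ^ 2 =
        ∫ z in S, d (x, z) ^ 2 :=
      (setIntegral_union hBT measurableSet_Ioo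
        (hIdz.mono_set (fun z hz => hSsub (Or.inl hz)))
        (hIdz.mono_set (fun z hz => hSsub (Or.inr hz)))).symm
    have hmono : ∫ z in S, d (x, z) ^ 2 ≤ ∫ z in Ioo (-H) 0, d (x, z) ^ 2 :=
      setIntegral_mono_set hIdz (Filter.Eventually.of_forall fun z => sq_nonneg _)
        (HasSubset.Subset.eventuallyLE hSsub)
    calc ∫ z in S, v (x, z) ^ 2
        = (∫ z in B, v (x, z) ^ 2) + ∫ z in T, v (x, z) ^ 2 := hsplit
      _ ≤ δ ^ 2 * (∫ z in B, d (x, z) ^ 2) + δ ^ 2 * ∫ z in T, d (x, z) ^ 2 :=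
          add_le_add hbot htop
      _ = δ ^ 2 * ∫ z in S, d (x, z) ^ 2 := by rw [← hsum]; ring
      _ ≤ δ ^ 2 * ∫ z in Ioo (-H) 0, d (x, z) ^ 2 := by
          exact mul_le_mul_of_nonneg_left hmono (sq_nonneg δ)
  -- integrate in x
  calc ∫ p in Ioo 0 L ×ˢ S, v p ^ 2
      = ∫ x in Ioo 0 L, ∫ z in S, v (x, z) ^ 2 := by
        rw [hprodA]; exact integral_prod _ hIvp
    _ ≤ ∫ x in Ioo 0 L, δ ^ 2 * ∫ z in Ioo (-H) 0, d (x, z) ^ 2 := by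
        apply integral_mono hIvp.integral_prod_left
          (hIdp.integral_prod_left.const_mul (δ ^ 2))
        exact fun x => key x
    _ = δ ^ 2 * ∫ x in Ioo 0 L, ∫ z in Ioo (-H) 0, d (x, z) ^ 2 := integral_const_mul _ _
    _ = δ ^ 2 * ∫ p in Ioo 0 L ×ˢ Ioo (-H) 0, d p ^ 2 := by
        rw [hprodΩ]; rw [integral_prod _ hIdp]

/-- Estimate of the linear non-symmetric term: if `φ_b'` is supported in the
two boundary strips of width `δ` with `|φ_b'| ≤ c_Δ/δ`, `u` is divergence-free
with vanishing vertical component at `z = 0, -H`, and `ψ` vanishes at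
`z = 0, -H`, then
`|∫_Ω φ_b' u_z ψ| ≤ c_Δ δ ‖∂_x u_x‖_{L²(Ω)} ‖∂_z ψ‖_{L²(Ω)}`. -/
theorem stmt13 (L H δ cΔ : ℝ)
    (hL : 0 < L) (hH : 0 < H) (hδ : 0 < δ) (hδH : 2 * δ < H) (hc : 0 < cΔ)
    (g : ℝ → ℝ) (hgmeas : Measurable g)
    (hsupp : ∀ z, z ∉ Ioo (-H) (-H + δ) ∪ Ioo (-δ) 0 → g z = 0)
    (hgb : ∀ z, |g z| ≤ cΔ / δ)
    (u : ℝ × ℝ → ℝ × ℝ) (hu : ContDiff ℝ 1 u)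
    (hdiv : ∀ x, (fderiv ℝ u x (1, 0)).1 + (fderiv ℝ u x (0, 1)).2 = 0)
    (huz0 : ∀ x, (u (x, 0)).2 = 0) (huzH : ∀ x, (u (x, -H)).2 = 0)
    (ψ : ℝ × ℝ → ℝ) (hψ : ContDiff ℝ 1 ψ)
    (hψ0 : ∀ x, ψ (x, 0) = 0) (hψH : ∀ x, ψ (x, -H) = 0) :
    |∫ x in Ioo 0 L ×ˢ Ioo (-H) 0, g x.2 * (u x).2 * ψ x| ≤
      cΔ * δ *
        Real.sqrt (∫ x in Ioo 0 L ×ˢ Ioo (-H) 0, ((fderiv ℝ u x (1, 0)).1) ^ 2) *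
        Real.sqrt (∫ x in Ioo 0 L ×ˢ Ioo (-H) 0, (fderiv ℝ ψ x (0, 1)) ^ 2) := by
  set S : Set ℝ := Ioo (-H) (-H + δ) ∪ Ioo (-δ) 0 with hSdef
  set Ω : Set (ℝ × ℝ) := Ioo 0 L ×ˢ Ioo (-H) 0 with hΩdef
  set A : Set (ℝ × ℝ) := Ioo 0 L ×ˢ S with hAdef
  have hSsub : S ⊆ Ioo (-H) 0 := by
    rintro z (⟨h1, h2⟩ | ⟨h1, h2⟩) <;> exact ⟨by linarith, by linarith⟩
  have hAΩ : A ⊆ Ω := Set.prod_mono subset_rfl hSsub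
  have hSm : MeasurableSet S := measurableSet_Ioo.union measurableSet_Ioo
  have hAm : MeasurableSet A := measurableSet_Ioo.prod hSm
  have hΩm : MeasurableSet Ω := measurableSet_Ioo.prod measurableSet_Ioo
  -- continuity
  have huz : Continuous (fun p : ℝ × ℝ => (u p).2) := continuous_snd.comp hu.continuous
  have hψc : Continuous ψ := hψ.continuous
  have hFu : Continuous (fun p => (fderiv ℝ u p (0, 1)).2) := cont_fderiv_apply_snd u hu
  have hGψ : Continuous (fun p => fderiv ℝ ψ p (0, 1)) := cont_fderiv_scalar ψ hψ
  -- integrability on bounded sets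
  have hcompact : IsCompact (Icc (0:ℝ) L ×ˢ Icc (-H) (0:ℝ)) :=
    isCompact_Icc.prod isCompact_Icc
  have hΩK : Ω ⊆ Icc 0 L ×ˢ Icc (-H) 0 :=
    Set.prod_mono Ioo_subset_Icc_self Ioo_subset_Icc_self
  have hAK : A ⊆ Icc 0 L ×ˢ Icc (-H) 0 := (hAΩ.trans hΩK)
  have hIOn : ∀ f : ℝ × ℝ → ℝ, Continuous f → IntegrableOn f A := fun f hf =>
    (hf.continuousOn.integrableOn_compact hcompact).mono_set hAK
  -- Memℒp for Cauchy-Schwarz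
  have hmuz : MemLp (fun p : ℝ × ℝ => (u p).2) 2 (volume.restrict A) :=
    (memLp_two_iff_integrable_sq (huz.aestronglyMeasurable.restrict)).mpr
      (hIOn _ (huz.pow 2))
  have hmψ : MemLp ψ 2 (volume.restrict A) :=
    (memLp_two_iff_integrable_sq (hψc.aestronglyMeasurable.restrict)).mpr
      (hIOn _ (hψc.pow 2))
  -- the integrand
  set a : ℝ × ℝ → ℝ := fun p => g p.2 * (u p).2 * ψ p with hadef
  have hameas : AEStronglyMeasurable a volume :=
    (((hgmeas.comp measurable_snd).mul huz.measurable).mul hψc.measurable).aestronglyMeasurable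
  have habound : ∀ p : ℝ × ℝ, |a p| ≤ (cΔ / δ) * |(u p).2 * ψ p| := by
    intro p
    show |g p.2 * (u p).2 * ψ p| ≤ _
    rw [mul_assoc, abs_mul]
    exact mul_le_mul_of_nonneg_right (hgb p.2) (abs_nonneg _)
  have hIa : IntegrableOn a Ω := by
    apply Integrable.mono' (g := fun p => (cΔ / δ) * |(u p).2 * ψ p|)
    · exact ((continuous_const.mul ((huz.mul hψc).abs)).continuousOn.integrableOn_compact
        hcompact).mono_set hΩK
    · exact hameas.restrict
    · exact Filter.Eventually.of_forall fun p => by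
        rw [Real.norm_eq_abs]; exact habound p
  have hIaA : IntegrableOn a A := hIa.mono_set hAΩ
  -- restrict the integral to A
  have hsplit : ∫ p in Ω, |a p| = ∫ p in A, |a p| := by
    have hzero : ∀ p ∈ Ω \ A, |a p| = 0 := by
      rintro ⟨x, z⟩ ⟨hpΩ, hpA⟩
      have hx : x ∈ Ioo 0 L := hpΩ.1
      have hz : z ∉ S := fun hzS => hpA ⟨hx, hzS⟩
      simp [hadef, hsupp z hz]
    have : Ω = A ∪ (Ω \ A) := (Set.union_diff_cancel hAΩ).symm
    rw [this, setIntegral_union disjoint_sdiff_right (hΩm.diff hAm)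
      hIaA.abs (IntegrableOn.mono_set hIa.abs Set.diff_subset),
      setIntegral_eq_zero_of_forall_eq_zero hzero, add_zero]
  -- Poincaré estimates
  have hPu : ∫ p in A, ((u p).2) ^ 2 ≤
      δ ^ 2 * ∫ p in Ω, ((fderiv ℝ u p (0, 1)).2) ^ 2 :=
    strip_poincare L H δ hL hH hδ hδH (fun p => (u p).2) (fun p => (fderiv ℝ u p (0, 1)).2)
      huz hFu (fun x z => slice_deriv_snd u hu x z) huz0 huzH
  have hPψ : ∫ p in A, (ψ p) ^ 2 ≤ δ ^ 2 * ∫ p in Ω, (fderiv ℝ ψ p (0, 1)) ^ 2 :=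
    strip_poincare L H δ hL hH hδ hδH ψ (fun p => fderiv ℝ ψ p (0, 1))
      hψc hGψ (fun x z => slice_deriv_scalar ψ hψ x z) hψ0 hψH
  -- square-root bounds
  set Iu : ℝ := ∫ p in Ω, ((fderiv ℝ u p (1, 0)).1) ^ 2 with hIu
  set Iψ : ℝ := ∫ p in Ω, (fderiv ℝ ψ p (0, 1)) ^ 2 with hIψ
  have hIueq : ∫ p in Ω, ((fderiv ℝ u p (0, 1)).2) ^ 2 = Iu := by
    rw [hIu]
    apply integral_congr_ae
    filter_upwards with p
    rw [show ((fderiv ℝ u p) (1, 0)).1 = -((fderiv ℝ u p) (0, 1)).2 by linarith [hdiv p]]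
    ring
  have hIunn : 0 ≤ Iu := setIntegral_nonneg hΩm (fun p _ => sq_nonneg _)
  have hIψnn : 0 ≤ Iψ := setIntegral_nonneg hΩm (fun p _ => sq_nonneg _)
  have hsu : Real.sqrt (∫ p in A, ((u p).2) ^ 2) ≤ δ * Real.sqrt Iu := by
    calc Real.sqrt (∫ p in A, ((u p).2) ^ 2) ≤ Real.sqrt (δ ^ 2 * Iu) :=
          Real.sqrt_le_sqrt (by rw [← hIueq]; exact hPu)
      _ = δ * Real.sqrt Iu := by
          rw [Real.sqrt_mul (sq_nonneg δ), Real.sqrt_sq hδ.le]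
  have hsψ : Real.sqrt (∫ p in A, (ψ p) ^ 2) ≤ δ * Real.sqrt Iψ := by
    calc Real.sqrt (∫ p in A, (ψ p) ^ 2) ≤ Real.sqrt (δ ^ 2 * Iψ) :=
          Real.sqrt_le_sqrt hPψ
      _ = δ * Real.sqrt Iψ := by
          rw [Real.sqrt_mul (sq_nonneg δ), Real.sqrt_sq hδ.le]
  -- Cauchy-Schwarz on A
  have hcs := my_cs (volume.restrict A) (fun p => (u p).2) ψ hmuz hmψ
  -- main chain
  have main : |∫ p in Ω, a p| ≤ (cΔ / δ) * ((δ * Real.sqrt Iu) * (δ * Real.sqrt Iψ)) := by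
    calc |∫ p in Ω, a p| ≤ ∫ p in Ω, |a p| := by
          simpa [Real.norm_eq_abs] using
            norm_integral_le_integral_norm (μ := volume.restrict Ω) a
      _ = ∫ p in A, |a p| := hsplit
      _ ≤ ∫ p in A, (cΔ / δ) * |(u p).2 * ψ p| := by
          apply setIntegral_mono_on hIaA.abs
            (((continuous_const.mul ((huz.mul hψc).abs)).continuousOn.integrableOn_compact
              hcompact).mono_set hAK) hAm
          exact fun p _ => habound p
      _ = (cΔ / δ) * ∫ p in A, |(u p).2 * ψ p| := integral_const_mul _ _
      _ ≤ (cΔ / δ) * (Real.sqrt (∫ p in A, ((u p).2) ^ 2) * Real.sqrt (∫ p in A, (ψ p) ^ 2)) := by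
          apply mul_le_mul_of_nonneg_left hcs (by positivity)
      _ ≤ (cΔ / δ) * ((δ * Real.sqrt Iu) * (δ * Real.sqrt Iψ)) := by
          apply mul_le_mul_of_nonneg_left _ (by positivity)
          exact mul_le_mul hsu hsψ (Real.sqrt_nonneg _) (by positivity)
  calc |∫ x in Ω, g x.2 * (u x).2 * ψ x| = |∫ p in Ω, a p| := rfl
    _ ≤ (cΔ / δ) * ((δ * Real.sqrt Iu) * (δ * Real.sqrt Iψ)) := main
    _ = cΔ * δ * Real.sqrt Iu * Real.sqrt Iψ := by field_simp
end
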